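/- arXiv:1701.00790 — 11 statements merged into one kernel-verified Lean document; each statement's English description precedes it below -/
import Mathlib

section
/- For every integer n ≥ 2 and every B > 0, there exist a simple derivation D of ℂ[x,y], a ℂ-algebra automorphism ρ of ℂ[x,y], and a nonzero constant c ∈ ℂ such that: ρ ∘ D ∘ ρ⁻¹ = c • D, the order of ρ in the automorphism group is exactly n, and the degree of ρ, namely max(totalDegree ρ(x), totalDegree ρ(y)), is greater than B. -/
/-!
For `a ≥ 1` the derivation `D = ∂ₓ + (xᵃ y + 1) ∂_y` of `K[x, y]` (`K` of characteristic zero) is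
simple, by Shamsuddin's argument. Take an element `f` of minimal `y`-degree `m` in a nonzero
`D`-stable ideal. If `m = 0`, differentiating `f ∈ K[x]` in `x` lowers its degree down to a nonzero
constant. If `m > 0`, with `P, Q` the coefficients of `yᵐ, yᵐ⁻¹` in `f`, minimality forces
`P • D f = (D f)ₘ • f`, and the coefficient of `yᵐ⁻¹` of this identity says that `Q / P` is, up to
a constant factor, a rational solution of `w' = xᵃ w + 1`. Clearing the gcd of `P` and `Q` turns it
into a polynomial solution, which cannot exist as the right-hand side has the larger degree.

For `a = n - 1` and `ζ` a primitive `n`-th root of unity, the homothety `(x, y) ↦ (ζ x, ζ y)` has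
order `n` and conjugates `D` to `ζ⁻¹ D`. Conjugating both by the shear `y ↦ y + xᵐ` with `n ∣ m`
and `B < m` preserves all of this and sends `y` to `ζ y + (ζ - 1) xᵐ`, of degree `m`.
-/

abbrev Rxy : Type := MvPolynomial (Fin 2) ℂ

def IsSimpleDer (D : Derivation ℂ Rxy Rxy) : Prop :=
  ∀ I : Ideal Rxy, (∀ a ∈ I, D a ∈ I) → I = ⊥ ∨ I = ⊤

def Derivation.IsSimple {R A : Type*} [CommSemiring R] [CommSemiring A] [Algebra R A]
    (D : Derivation R A A) : Prop :=
  ∀ I : Ideal A, (∀ a ∈ I, D a ∈ I) → I = ⊥ ∨ I = ⊤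

namespace AlgEquiv

variable {R A B : Type*} [CommSemiring R] [CommSemiring A] [CommSemiring B] [Algebra R A]
  [Algebra R B]

def conjDerivation (e : A ≃ₐ[R] B) (D : Derivation R A A) : Derivation R B B where
  toLinearMap := e.toLinearMap ∘ₗ D.toLinearMap ∘ₗ e.symm.toLinearMap
  map_one_eq_zero' := by simp
  leibniz' a b := by simp [smul_eq_mul]

@[simp]
theorem conjDerivation_apply (e : A ≃ₐ[R] B) (D : Derivation R A A) (b : B) :
    e.conjDerivation D b = e (D (e.symm b)) :=
  rfl

@[simp]
theorem conjDerivation_symm_conjDerivation (e : A ≃ₐ[R] B) (D : Derivation R B B) :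
    e.conjDerivation (e.symm.conjDerivation D) = D := by
  ext; simp

theorem conjDerivation_smul (e : A ≃ₐ[R] B) (c : R) (D : Derivation R A A) :
    e.conjDerivation (c • D) = c • e.conjDerivation D := by
  ext; simp

theorem conjDerivation_conj_of_conjDerivation_eq_smul {ρ : A ≃ₐ[R] A} {D : Derivation R A A}
    {c : R} (h : ρ.conjDerivation D = c • D) (σ : A ≃ₐ[R] A) :
    (MulAut.conj σ ρ).conjDerivation (σ.conjDerivation D) = c • σ.conjDerivation D := by
  rw [← conjDerivation_smul, ← h]
  ext
  simp only [conjDerivation_apply, MulAut.conj_apply, ← aut_inv, mul_inv_rev, inv_inv, mul_apply]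
  simp [aut_inv]

theorem _root_.Derivation.IsSimple.conjDerivation {D : Derivation R A A} (hD : D.IsSimple)
    (e : A ≃ₐ[R] B) : (e.conjDerivation D).IsSimple := by
  intro I hI
  have hcomap : ∀ a ∈ I.comap e, D a ∈ I.comap e := fun a ha => by
    simpa using hI (e a) ha
  have hI : I = (I.comap e).comap e.symm := by
    ext; simp
  rcases hD _ hcomap with h | h <;> rw [hI, h]
  · exact Or.inl (Ideal.comap_bot_of_injective _ e.symm.injective)
  · exact Or.inr Ideal.comap_top

end AlgEquiv

namespace Polynomial

open scoped Bivariate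

theorem derivation_C_eq_C_derivative {R : Type*} [CommRing R]
    (D : Derivation R R[X][Y] R[X][Y]) (hD : D (C X) = 1) (p : R[X]) :
    D (C p) = C (derivative p) := by
  have : D.compAlgebraMap R[X] = (Algebra.linearMap R[X] R[X][Y]).compDer derivative' :=
    derivation_ext (by simpa using hD)
  exact congr($this p)

theorem coeff_derivation {R : Type*} [CommRing R]
    (D : Derivation R R[X][Y] R[X][Y]) (hD : ∀ p, D (C p) = C (derivative p)) (f : R[X][Y])
    (k : ℕ) : (D f).coeff k = derivative (f.coeff k) + (D Y * derivative f).coeff k := by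
  induction f using Polynomial.induction_on' with
  | add f g hf hg => simp only [map_add, coeff_add, hf, hg, mul_add]; ring
  | monomial n c =>
    have h : D (C c * Y ^ n) = C (derivative c) * Y ^ n + D Y * derivative (C c * Y ^ n) := by
      rw [D.leibniz, D.leibniz_pow, hD, derivative_C_mul_X_pow]
      simp only [smul_eq_mul, nsmul_eq_mul, map_mul, map_natCast]
      ring
    rw [← C_mul_X_pow_eq_monomial, h, coeff_add, coeff_C_mul_X_pow, coeff_C_mul_X_pow]
    split_ifs <;> simp

theorem coeff_derivation_of_apply_Y {R : Type*} [CommRing R] {g h : R[X]}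
    (D : Derivation R R[X][Y] R[X][Y]) (hD : ∀ p, D (C p) = C (derivative p))
    (hDY : D Y = C g * Y + C h) (f : R[X][Y]) (k : ℕ) :
    (D f).coeff k =
      derivative (f.coeff k) + k * g * f.coeff k + (k + 1) * h * f.coeff (k + 1) := by
  rw [coeff_derivation D hD, hDY, add_mul, mul_assoc, coeff_add, coeff_C_mul, coeff_C_mul,
    coeff_derivative]
  cases k with
  | zero => simp
  | succ k => rw [coeff_X_mul, coeff_derivative]; push_cast; ring

theorem exists_derivative_eq_of_rational {K : Type*} [Field K] [CharZero K] {g h P Q : K[X]}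
    {μ : K} (hμ : μ ≠ 0) (hP : P ≠ 0)
    (hPQ : P * derivative Q - derivative P * Q = g * P * Q + C μ * h * P ^ 2) :
    ∃ r, derivative r = g * r + h := by
  classical
  obtain ⟨P₁, Q₁, hP₁, hQ₁, hunit⟩ := extract_gcd P Q
  have hcop : IsCoprime P₁ Q₁ := (gcd_isUnit_iff _ _).1 hunit
  generalize gcd P Q = d at hP₁ hQ₁
  subst hP₁ hQ₁
  -- the equation is homogeneous of degree two in `(P, Q)`
  have E : P₁ * derivative Q₁ - derivative P₁ * Q₁ = g * P₁ * Q₁ + C μ * h * P₁ ^ 2 := by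
    refine mul_left_cancel₀ (pow_ne_zero 2 (left_ne_zero_of_mul hP)) ?_
    rw [derivative_mul, derivative_mul] at hPQ
    linear_combination hPQ
  have hdvd : P₁ ∣ derivative P₁ :=
    hcop.dvd_of_dvd_mul_right ⟨derivative Q₁ - g * Q₁ - C μ * h * P₁, by linear_combination -E⟩
  obtain ⟨c, rfl⟩ : ∃ c, P₁ = C c :=
    ⟨_, eq_C_of_natDegree_eq_zero (derivative_eq_zero.1 (dvd_derivative_iff.1 hdvd))⟩
  have hc : c ≠ 0 := by rintro rfl; simp at hP
  have hQ₁ : derivative Q₁ = g * Q₁ + C (μ * c) * h := by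
    refine mul_left_cancel₀ (C_ne_zero.2 hc) ?_
    rw [derivative_C, zero_mul, sub_zero] at E
    rw [C_mul]
    linear_combination E
  have hinv : C (μ * c)⁻¹ * C (μ * c) = 1 := by
    rw [← C_mul, inv_mul_cancel₀ (mul_ne_zero hμ hc), C_1]
  exact ⟨C (μ * c)⁻¹ * Q₁, by
    rw [derivative_C_mul]; linear_combination C (μ * c)⁻¹ * hQ₁ + h * hinv⟩

theorem derivative_ne_X_pow_mul_add_one {R : Type*} [Semiring R] [Nontrivial R] {a : ℕ}
    (ha : a ≠ 0) (r : R[X]) : derivative r ≠ X ^ a * r + 1 := by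
  intro hr
  rcases eq_or_ne r 0 with rfl | hr0
  · simp at hr
  have := congr(coeff $hr (a + r.natDegree))
  rw [coeff_derivative, coeff_eq_zero_of_natDegree_lt (by omega), zero_mul, coeff_add,
    coeff_X_pow_mul', if_pos (by omega), Nat.add_sub_cancel_left, coeff_one, if_neg (by omega),
    add_zero] at this
  exact leadingCoeff_ne_zero.2 hr0 this.symm

theorem ideal_eq_top_of_C_mem {K : Type*} [Field K] [CharZero K]
    (D : Derivation K K[X][Y] K[X][Y]) (hD : ∀ p, D (C p) = C (derivative p))
    {I : Ideal K[X][Y]} (hI : ∀ a ∈ I, D a ∈ I) {p : K[X]} (hp : p ≠ 0) (hpI : C p ∈ I) :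
    I = ⊤ := by
  induction hn : p.natDegree using Nat.strong_induction_on generalizing p with
  | _ n ih =>
  rcases eq_or_ne n 0 with rfl | hn0
  · rw [natDegree_eq_zero] at hn
    obtain ⟨c, rfl⟩ := hn
    exact I.eq_top_of_isUnit_mem hpI (isUnit_C.2 (isUnit_C.2 (Ne.isUnit (by simpa using hp))))
  · have hp' : derivative p ≠ 0 := fun h0 => hn0 (hn ▸ derivative_eq_zero.1 h0)
    exact ih _ (hn ▸ natDegree_derivative_lt (hn ▸ hn0)) hp' (hD p ▸ hI _ hpI) rfl

theorem isSimple_of_forall_derivative_ne {K : Type*} [Field K] [CharZero K] {g h : K[X]}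
    (D : Derivation K K[X][Y] K[X][Y]) (hDX : D (C X) = 1) (hDY : D Y = C g * Y + C h)
    (hsol : ∀ r : K[X], derivative r ≠ g * r + h) : D.IsSimple := by
  have hD := derivation_C_eq_C_derivative D hDX
  have hcoeff := coeff_derivation_of_apply_Y D hD hDY
  intro I hI
  refine or_iff_not_imp_left.2 fun hbot => ?_
  obtain ⟨f, hfI, hf⟩ := Submodule.exists_mem_ne_zero_of_ne_bot hbot
  induction hm : f.natDegree using Nat.strong_induction_on generalizing f with
  | _ m ih =>
  cases m with
  | zero =>
    rw [eq_C_of_natDegree_eq_zero hm] at hfI hf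
    exact ideal_eq_top_of_C_mem D hD hI (by simpa using hf) hfI
  | succ k =>
  have hP : f.coeff (k + 1) ≠ 0 := by rw [← hm]; exact leadingCoeff_ne_zero.2 hf
  have hfN : ∀ N, k + 1 < N → f.coeff N = 0 := fun N hN =>
    coeff_eq_zero_of_natDegree_lt (hm ▸ hN)
  -- `f'` has lower degree; if it vanishes, its coefficient of `Y ^ k` is the equation saying
  -- that `f.coeff k / f.coeff (k + 1)` solves `w' = g w - (k + 1) h`
  set f' := C (f.coeff (k + 1)) * D f - C ((D f).coeff (k + 1)) * f
  have hf'I : f' ∈ I := I.sub_mem (I.mul_mem_left _ (hI f hfI)) (I.mul_mem_left _ hfI)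
  have hf'deg : f'.degree < ↑(k + 1) := by
    refine (degree_lt_iff_coeff_zero _ _).2 fun N hN => ?_
    rcases hN.eq_or_lt with rfl | hN
    · simp only [f', coeff_sub, coeff_C_mul]; ring
    · rw [coeff_sub, coeff_C_mul, coeff_C_mul, hcoeff f N, hfN N hN, hfN (N + 1) (by omega)]
      simp
  by_cases hf' : f' = 0
  · have hk := congr(coeff $hf' k)
    simp only [f', coeff_sub, coeff_C_mul, coeff_zero, hcoeff, hfN (k + 2) (by omega)] at hk
    push_cast at hk
    obtain ⟨r, hr⟩ := exists_derivative_eq_of_rational (g := g) (h := h) (μ := -(k + 1))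
      (Q := f.coeff k) (neg_ne_zero.2 k.cast_add_one_ne_zero) hP
      (by rw [map_neg, map_add, map_natCast, map_one]; linear_combination hk)
    exact (hsol r hr).elim
  · exact ih _ (by rwa [natDegree_lt_iff_degree_lt hf']) _ hf'I hf' rfl

end Polynomial

open MvPolynomial

namespace MvPolynomial

variable {σ R : Type*} [CommRing R]

theorem algEquiv_ext {e₁ e₂ : MvPolynomial σ R ≃ₐ[R] MvPolynomial σ R}
    (h : ∀ i, e₁ (X i) = e₂ (X i)) : e₁ = e₂ :=
  AlgEquiv.coe_toAlgHom_injective (algHom_ext h)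

noncomputable def scaleAut : Rˣ →* (MvPolynomial σ R ≃ₐ[R] MvPolynomial σ R) where
  toFun u := AlgEquiv.ofAlgHom (aeval fun i => C (u : R) * X i) (aeval fun i => C ↑u⁻¹ * X i)
    (algHom_ext fun i => by
      rw [AlgHom.comp_apply, aeval_X, map_mul, aeval_C, aeval_X, algebraMap_eq, ← mul_assoc,
        ← C_mul, Units.inv_mul, C_1, one_mul, AlgHom.id_apply])
    (algHom_ext fun i => by
      rw [AlgHom.comp_apply, aeval_X, map_mul, aeval_C, aeval_X, algebraMap_eq, ← mul_assoc,
        ← C_mul, Units.mul_inv, C_1, one_mul, AlgHom.id_apply])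
  map_one' := algEquiv_ext fun i => by simp
  map_mul' u v := algEquiv_ext fun i => by
    simp only [Units.val_mul, aeval_eq_bind₁, AlgEquiv.ofAlgHom_apply, bind₁_X_right,
      AlgEquiv.mul_apply, map_mul, algHom_C, algebraMap_eq]
    ring

@[simp]
theorem scaleAut_X (u : Rˣ) (i : σ) : scaleAut u (X i) = C (u : R) * X i := by
  simp [scaleAut]

@[simp]
theorem scaleAut_C (u : Rˣ) (r : R) : scaleAut u (C r) = (C r : MvPolynomial σ R) :=
  (scaleAut u).commutes r

theorem scaleAut_symm_X (u : Rˣ) (i : σ) :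
    (scaleAut u).symm (X i) = C ((u⁻¹ : Rˣ) : R) * X i := by
  rw [← AlgEquiv.aut_inv, ← map_inv, scaleAut_X]

theorem scaleAut_injective [Nonempty σ] [Nontrivial R] :
    Function.Injective (scaleAut : Rˣ → MvPolynomial σ R ≃ₐ[R] MvPolynomial σ R) := by
  intro u v h
  obtain ⟨i⟩ := ‹Nonempty σ›
  have := congr(coeff (Finsupp.single i 1) ($h (X i)))
  simpa [Units.ext_iff] using this

noncomputable def shear (m : ℕ) : MvPolynomial (Fin 2) R ≃ₐ[R] MvPolynomial (Fin 2) R :=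
  AlgEquiv.ofAlgHom (aeval ![X 0, X 1 + X 0 ^ m]) (aeval ![X 0, X 1 - X 0 ^ m])
    (algHom_ext fun i => by fin_cases i <;> simp)
    (algHom_ext fun i => by fin_cases i <;> simp)

@[simp] theorem shear_C (m : ℕ) (r : R) : shear m (C r) = C r := (shear m).commutes r
@[simp] theorem shear_X_zero (m : ℕ) : shear (R := R) m (X 0) = X 0 := by simp [shear]
@[simp] theorem shear_X_one (m : ℕ) : shear (R := R) m (X 1) = X 1 + X 0 ^ m := by simp [shear]
@[simp] theorem shear_symm_X_one (m : ℕ) : (shear (R := R) m).symm (X 1) = X 1 - X 0 ^ m := by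
  simp [shear]

/-- `∂ₓ + (xᵃ y + 1) ∂_y` with `x = X 0`, `y = X 1`, the variables of `R[X][Y]` under
`Polynomial.Bivariate.equivMvPolynomial`. -/
noncomputable def shamsuddinDerivation (R : Type*) [CommRing R] (a : ℕ) :
    Derivation R (MvPolynomial (Fin 2) R) (MvPolynomial (Fin 2) R) :=
  mkDerivation R ![1, X 0 ^ a * X 1 + 1]

@[simp] theorem shamsuddinDerivation_X_zero (a : ℕ) : shamsuddinDerivation R a (X 0) = 1 := by
  simp [shamsuddinDerivation, mkDerivation_X]
@[simp] theorem shamsuddinDerivation_X_one (a : ℕ) :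
    shamsuddinDerivation R a (X 1) = X 0 ^ a * X 1 + 1 := by
  simp [shamsuddinDerivation, mkDerivation_X]

open Polynomial.Bivariate in
theorem isSimple_shamsuddinDerivation {K : Type*} [Field K] [CharZero K] {a : ℕ} (ha : a ≠ 0) :
    (shamsuddinDerivation K a).IsSimple := by
  set e := equivMvPolynomial K
  have hD : (e.symm.conjDerivation (shamsuddinDerivation K a)).IsSimple := by
    apply Polynomial.isSimple_of_forall_derivative_ne (g := Polynomial.X ^ a) (h := 1)
    · simp [e]
    · simp [e]
    · exact Polynomial.derivative_ne_X_pow_mul_add_one ha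
  simpa using hD.conjDerivation e

theorem scaleAut_conjDerivation_shamsuddinDerivation {a : ℕ} {u : Rˣ} (hu : u ^ (a + 1) = 1) :
    (scaleAut u).conjDerivation (shamsuddinDerivation R a) =
      ((u⁻¹ : Rˣ) : R) • shamsuddinDerivation R a := by
  refine derivation_ext (Fin.forall_fin_two.2 ⟨?_, ?_⟩)
  · simp [scaleAut_symm_X, smul_eq_C_mul]
  · have h : (C (u : R) * X 0) ^ a * (C (u : R) * X 1) =
        (C ((u ^ (a + 1) : Rˣ) : R) * (X 0 ^ a * X 1) : MvPolynomial (Fin 2) R) := by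
      rw [Units.val_pow_eq_pow_val, C_pow]; ring
    simp only [AlgEquiv.conjDerivation_apply, scaleAut_symm_X, Derivation.leibniz,
      shamsuddinDerivation_X_one, smul_eq_mul, derivation_C, mul_zero, add_zero, map_mul,
      scaleAut_C, map_add, map_pow, scaleAut_X, map_one, Derivation.coe_smul, Pi.smul_apply,
      smul_add, smul_eq_C_mul, mul_one]
    rw [h, hu, Units.val_one, C_1, one_mul]
    ring

theorem le_totalDegree_of_coeff_single_ne_zero {p : MvPolynomial σ R} {i : σ} {m : ℕ}
    (h : coeff (Finsupp.single i m) p ≠ 0) : m ≤ p.totalDegree := by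
  simpa using le_totalDegree (mem_support_iff.2 h)

theorem conj_shear_scaleAut_X_one {m : ℕ} {u : Rˣ} (hu : u ^ m = 1) :
    MulAut.conj (shear m) (scaleAut u) (X 1) = C (u : R) * X 1 + C ((u : R) - 1) * X 0 ^ m := by
  have h : (C (u : R) * X 0) ^ m = (X 0 ^ m : MvPolynomial (Fin 2) R) := by
    rw [mul_pow, ← C_pow, ← Units.val_pow_eq_pow_val, hu, Units.val_one, C_1, one_mul]
  rw [MulAut.conj_apply, AlgEquiv.mul_apply, AlgEquiv.mul_apply, AlgEquiv.aut_inv,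
    shear_symm_X_one, map_sub, map_pow, scaleAut_X, scaleAut_X, h, map_sub, map_mul, shear_C,
    shear_X_one, map_pow, shear_X_zero, C_sub, C_1]
  ring

theorem le_totalDegree_conj_shear_scaleAut_X_one {m : ℕ} {u : Rˣ} (hu : u ^ m = 1)
    (hu1 : u ≠ 1) : m ≤ (MulAut.conj (shear m) (scaleAut u) (X 1)).totalDegree := by
  refine le_totalDegree_of_coeff_single_ne_zero (i := 0) ?_
  rw [conj_shear_scaleAut_X_one hu, coeff_add, coeff_C_mul, coeff_C_mul, coeff_X,
    X_pow_eq_monomial, coeff_monomial, if_pos rfl, if_neg, mul_zero, mul_one, zero_add]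
  · exact sub_ne_zero.2 (Units.val_eq_one.not.2 hu1)
  · simp [Finsupp.single_eq_single_iff]

end MvPolynomial

theorem exists_simple_derivation_with_symmetry_general (n : ℕ) (hn : 2 ≤ n) (B : ℕ) :
    ∃ (D : Derivation ℂ Rxy Rxy) (ρ : Rxy ≃ₐ[ℂ] Rxy) (c : ℂ),
      IsSimpleDer D ∧ c ≠ 0 ∧ (∀ a : Rxy, ρ (D (ρ.symm a)) = c • D a) ∧
      orderOf ρ = n ∧
      B < max (ρ (X 0)).totalDegree (ρ (X 1)).totalDegree := by
  obtain ⟨ζ, hζ⟩ : ∃ ζ : ℂˣ, IsPrimitiveRoot ζ n :=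
    ⟨_, (Complex.isPrimitiveRoot_exp n (by omega)).isUnit_unit (by omega)⟩
  have hζa : ζ ^ (n - 1 + 1) = 1 := by rw [Nat.sub_add_cancel (by omega), hζ.pow_eq_one]
  have hζm : ζ ^ (n * (B + 1)) = 1 := by rw [pow_mul, hζ.pow_eq_one, one_pow]
  set σ := shear (R := ℂ) (n * (B + 1))
  have hfol := AlgEquiv.conjDerivation_conj_of_conjDerivation_eq_smul
    (scaleAut_conjDerivation_shamsuddinDerivation hζa) σ
  refine ⟨σ.conjDerivation (shamsuddinDerivation ℂ (n - 1)), MulAut.conj σ (scaleAut ζ), ↑ζ⁻¹,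
    (isSimple_shamsuddinDerivation (by omega)).conjDerivation σ, Units.ne_zero _,
    fun x => congr($hfol x), ?_, ?_⟩
  · rw [MulEquiv.orderOf_eq, orderOf_injective _ scaleAut_injective, ← hζ.eq_orderOf]
  · calc B < n * (B + 1) := by nlinarith
      _ ≤ _ := le_totalDegree_conj_shear_scaleAut_X_one hζm (hζ.ne_one hn)
      _ ≤ _ := le_max_right _ _

/-- For every `n ≥ 2` and `B > 0` there is a simple derivation `D` of `ℂ[x,y]` and
an automorphism `ρ` preserving the associated foliation (`ρ ∘ D ∘ ρ⁻¹ = c • D`, `c ≠ 0`)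
of order exactly `n` and of degree greater than `B`. -/
theorem exists_simple_derivation_with_symmetry (n : ℕ) (hn : 2 ≤ n) (B : ℕ) (hB : 0 < B) :
    ∃ (D : Derivation ℂ Rxy Rxy) (ρ : Rxy ≃ₐ[ℂ] Rxy) (c : ℂ),
      IsSimpleDer D ∧ c ≠ 0 ∧ (∀ a : Rxy, ρ (D (ρ.symm a)) = c • D a) ∧
      orderOf ρ = n ∧
      B < max (ρ (X 0)).totalDegree (ρ (X 1)).totalDegree :=
  exists_simple_derivation_with_symmetry_general n hn B
end

section
/- Let n ≥ 2 be an integer and let f, g ∈ ℂ[x,y]. Let D be the derivation of ℂ[x,y] with D(x) = f and D(y) = g. Assume D is simple and that the one-variable polynomial f(0,y), obtained by substituting x = 0 in f, is a nonzero constant. Let D_n be the derivation of ℂ[x,y] with D_n(x) = f(xⁿ, y) and D_n(y) = n·x^(n-1)·g(xⁿ, y), where f(xⁿ,y) and g(xⁿ,y) denote the substitution of xⁿ for x. Then D_n is also a simple derivation. -/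
/-!
Let `ψ : p(x, y) ↦ p(xⁿ, y)`. On generators one checks `Dₙ ∘ ψ = n xⁿ⁻¹ · (ψ ∘ D)`, so for
a `Dₙ`-stable ideal `I` the preimage under `ψ` of the saturation `I : x^∞` is `D`-stable,
hence `0` or everything. It is not `0` when `I ≠ 0`, because `ℂ[x, y]` is integral over the
image of `ψ`. If it is everything, some `xʲ` lies in `I`; since `Dₙ(x) ≡ f(0, y) = c` modulo
`x`, the elements `x` and `Dₙ(x)` are coprime, and differentiating `xʲ` lowers the exponent
until `1 ∈ I`.
-/

open MvPolynomial

theorem isUnit_natCast_of_ne_zero {R : Type*} [Ring R] [Algebra ℚ R] {m : ℕ} (hm : m ≠ 0) :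
    IsUnit (m : R) := by
  simpa using (Nat.cast_ne_zero.mpr hm : (m : ℚ) ≠ 0).isUnit.map (algebraMap ℚ R)

namespace Ideal

variable {R : Type*} [CommRing R]

/-- The saturation `I : s^∞`. -/
def saturate (I : Ideal R) (s : R) : Ideal R where
  carrier := {a | ∃ j : ℕ, s ^ j * a ∈ I}
  add_mem' := by
    rintro a b ⟨i, ha⟩ ⟨j, hb⟩
    refine ⟨i + j, ?_⟩
    have e : s ^ (i + j) * (a + b) = s ^ j * (s ^ i * a) + s ^ i * (s ^ j * b) := by ring
    rw [e]
    exact I.add_mem (I.mul_mem_left _ ha) (I.mul_mem_left _ hb)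
  zero_mem' := ⟨0, by simp⟩
  smul_mem' := by
    rintro r a ⟨j, ha⟩
    refine ⟨j, ?_⟩
    rw [smul_eq_mul, mul_left_comm]
    exact I.mul_mem_left r ha

variable {I : Ideal R} {s a : R}

theorem mem_saturate : a ∈ I.saturate s ↔ ∃ j : ℕ, s ^ j * a ∈ I := Iff.rfl

theorem le_saturate : I ≤ I.saturate s := fun a ha => ⟨0, by simpa using ha⟩

theorem mem_saturate_of_pow_mul_mem {m : ℕ} (h : s ^ m * a ∈ I.saturate s) :
    a ∈ I.saturate s := by
  obtain ⟨j, hj⟩ := h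
  exact ⟨j + m, by rwa [pow_add, mul_assoc]⟩

theorem derivation_mem_saturate {A : Type*} [CommSemiring A] [Algebra A R]
    (D : Derivation A R R) (hI : ∀ a ∈ I, D a ∈ I) (ha : a ∈ I.saturate s) :
    D a ∈ I.saturate s := by
  obtain ⟨j, hj⟩ := ha
  refine ⟨j + 1, ?_⟩
  have e : s * D (s ^ j * a) - (j * D s) * (s ^ j * a) = s ^ (j + 1) * D a := by
    rw [Derivation.leibniz, Derivation.leibniz_pow]
    rcases j with _ | j
    · simp
    · simp only [nsmul_eq_mul, smul_eq_mul, Nat.add_sub_cancel]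
      push_cast
      ring
  rw [← e]
  exact I.sub_mem (I.mul_mem_left _ (hI _ hj)) (I.mul_mem_left _ hj)

theorem comap_ne_bot_of_isIntegral {A B : Type*} [CommRing A] [Nontrivial A] [CommRing B]
    [IsDomain B] (φ : A →+* B) (hφ : φ.IsIntegral) {I : Ideal B} (hI : I ≠ ⊥) :
    I.comap φ ≠ ⊥ := by
  obtain ⟨b, hbI, hb0⟩ := Submodule.exists_mem_ne_zero_of_ne_bot hI
  obtain ⟨P, hPmonic, hP⟩ := hφ b
  exact comap_ne_bot_of_root_mem hb0 hbI hPmonic.ne_zero hP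

end Ideal

theorem Derivation.ideal_eq_top_of_pow_mem {A R : Type*} [CommSemiring A] [CommRing R]
    [Algebra A R] [Algebra ℚ R] (D : Derivation A R R) {I : Ideal R} (hI : ∀ a ∈ I, D a ∈ I)
    {s : R} (hs : IsCoprime s (D s)) {j : ℕ} (h : s ^ j ∈ I) : I = ⊤ := by
  obtain ⟨u, v, huv⟩ := hs
  induction j with
  | zero => exact (Ideal.eq_top_iff_one I).mpr (by simpa using h)
  | succ j ih =>
    apply ih
    have e : ((j + 1 : ℕ) : R) * s ^ j =
        (u * (j + 1 : ℕ)) * s ^ (j + 1) + v * D (s ^ (j + 1)) := by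
      rw [Derivation.leibniz_pow, Nat.add_sub_cancel, nsmul_eq_mul, smul_eq_mul]
      linear_combination (((j + 1 : ℕ) : R) * s ^ j) * huv.symm
    rw [← I.unit_mul_mem_iff_mem (isUnit_natCast_of_ne_zero j.succ_ne_zero), e]
    exact I.add_mem (I.mul_mem_left _ h) (I.mul_mem_left _ (hI _ h))

namespace MvPolynomial

theorem aeval_sub_aeval_mem {σ R A : Type*} [CommRing R] [CommRing A] [Algebra R A]
    (I : Ideal A) {v w : σ → A} (h : ∀ i, v i - w i ∈ I) (p : MvPolynomial σ R) :
    aeval v p - aeval w p ∈ I := by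
  rw [← Ideal.Quotient.eq, ← Ideal.Quotient.mkₐ_eq_mk R, comp_aeval_apply, comp_aeval_apply]
  congr 2 with i
  exact Ideal.Quotient.eq.mpr (h i)

theorem derivation_map_eq_mul_map_derivation {σ R A : Type*} [CommRing R] [CommRing A]
    [Algebra R A] (D : Derivation R (MvPolynomial σ R) (MvPolynomial σ R))
    (E : Derivation R A A) (φ : MvPolynomial σ R →ₐ[R] A) (u : A)
    (h : ∀ i, E (φ (X i)) = u * φ (D (X i))) (p : MvPolynomial σ R) :
    E (φ p) = u * φ (D p) := by
  induction p using MvPolynomial.induction_on with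
  | C a => simp [← algebraMap_eq]
  | add p q hp hq => simp only [map_add, hp, hq, mul_add]
  | mul_X p i hp =>
    simp only [map_mul, Derivation.leibniz, smul_eq_mul, map_add, hp, h]
    ring

theorem ringHom_isIntegral_of_isIntegralElem_X {σ R A : Type*} [CommRing R] [CommRing A]
    (φ : A →+* MvPolynomial σ R) (hC : ∀ r, φ.IsIntegralElem (C r))
    (hX : ∀ i, φ.IsIntegralElem (X i)) : φ.IsIntegral := by
  intro p
  induction p using MvPolynomial.induction_on with
  | C a => exact hC a
  | add p q hp hq => exact hp.add φ hq
  | mul_X p i hp => exact hp.mul φ (hX i)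

theorem isIntegral_aeval_X_pow {R : Type*} [CommRing R] {n : ℕ} (hn : n ≠ 0) :
    (aeval (R := R) ![(X 0 : MvPolynomial (Fin 2) R) ^ n, X 1]).toRingHom.IsIntegral := by
  set ψ := aeval (R := R) ![(X 0 : MvPolynomial (Fin 2) R) ^ n, X 1]
  refine ringHom_isIntegral_of_isIntegralElem_X _ (fun r => ?_)
    (Fin.forall_fin_two.mpr ⟨?_, ?_⟩)
  · simpa [ψ] using ψ.toRingHom.isIntegralElem_map (x := C r)
  · exact ⟨Polynomial.X ^ n - Polynomial.C (X 0), Polynomial.monic_X_pow_sub_C _ hn,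
      by simp [ψ]⟩
  · simpa [ψ] using ψ.toRingHom.isIntegralElem_map (x := X 1)

theorem isCoprime_X_aeval_X_pow {K : Type*} [Field K] {n : ℕ} (hn : n ≠ 0)
    {f : MvPolynomial (Fin 2) K} {c : K} (hc : c ≠ 0)
    (hf0 : aeval ![(0 : MvPolynomial (Fin 2) K), X 1] f = C c) :
    IsCoprime (X 0) (aeval ![(X 0 : MvPolynomial (Fin 2) K) ^ n, X 1] f) := by
  have hmem : aeval ![(X 0 : MvPolynomial (Fin 2) K) ^ n, X 1] f - aeval ![0, X 1] f ∈
      Ideal.span {X 0} := by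
    refine aeval_sub_aeval_mem _ (Fin.forall_fin_two.mpr ⟨?_, by simp⟩) f
    simpa [Ideal.mem_span_singleton] using dvd_pow_self (X 0 : MvPolynomial (Fin 2) K) hn
  obtain ⟨r, hr⟩ := Ideal.mem_span_singleton'.mp hmem
  rw [hf0, eq_sub_iff_add_eq', mul_comm] at hr
  rw [← hr, IsCoprime.add_mul_left_right_iff]
  exact ⟨0, C c⁻¹, by simp [← C_mul, hc]⟩

end MvPolynomial

/-- If `D = f ∂x + g ∂y` is a simple derivation of `ℂ[x,y]` such that `f(0,y)` is a
nonzero constant, then the pullback derivation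
`D_n = f(xⁿ,y) ∂x + n x^(n-1) g(xⁿ,y) ∂y` is also simple, for any `n ≥ 2`. -/
theorem pullback_of_simple_derivation_is_simple (n : ℕ) (hn : 2 ≤ n) (f g : Rxy)
    (D : Derivation ℂ Rxy Rxy) (hDx : D (X 0) = f) (hDy : D (X 1) = g)
    (hsimple : IsSimpleDer D)
    (c : ℂ) (hc : c ≠ 0) (hf0 : aeval ![(0 : Rxy), X 1] f = C c)
    (Dn : Derivation ℂ Rxy Rxy)
    (hDnx : Dn (X 0) = aeval ![(X 0 : Rxy) ^ n, X 1] f)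
    (hDny : Dn (X 1) = (n : Rxy) * X 0 ^ (n - 1) * aeval ![(X 0 : Rxy) ^ n, X 1] g) :
    IsSimpleDer Dn := by
  intro I hI
  have hn0 : n ≠ 0 := by omega
  set ψ : Rxy →ₐ[ℂ] Rxy := aeval ![X 0 ^ n, X 1]
  have intertwine (p : Rxy) : Dn (ψ p) = ((n : Rxy) * X 0 ^ (n - 1)) * ψ (D p) := by
    refine derivation_map_eq_mul_map_derivation D Dn ψ _ (Fin.forall_fin_two.mpr ⟨?_, ?_⟩) p
    · have hψX : ψ (X 0) = X 0 ^ n := by simp [ψ]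
      rw [hψX, Derivation.leibniz_pow, hDnx, hDx, nsmul_eq_mul, smul_eq_mul, mul_assoc]
    · simp [ψ, hDy, hDny]
  have hJ : ∀ a ∈ (I.saturate (X 0)).comap ψ, D a ∈ (I.saturate (X 0)).comap ψ := by
    intro a ha
    have h := Ideal.derivation_mem_saturate Dn hI (Ideal.mem_comap.mp ha)
    rw [intertwine, mul_assoc, Ideal.unit_mul_mem_iff_mem _ (isUnit_natCast_of_ne_zero hn0)] at h
    exact Ideal.mem_comap.mpr (Ideal.mem_saturate_of_pow_mul_mem h)
  rcases hsimple _ hJ with hbot | htop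
  · left
    by_contra hI0
    exact Ideal.comap_ne_bot_of_isIntegral ψ.toRingHom (isIntegral_aeval_X_pow hn0) hI0 <|
      eq_bot_iff.mpr ((Ideal.comap_mono Ideal.le_saturate).trans hbot.le)
  · right
    obtain ⟨j, hj⟩ := Ideal.mem_comap.mp (htop ▸ Submodule.mem_top : (1 : Rxy) ∈ _)
    rw [map_one, mul_one] at hj
    exact Dn.ideal_eq_top_of_pow_mem hI (hDnx ▸ isCoprime_X_aeval_X_pow hn0 hc hf0) hj
end

section
/- Let n ≥ 2 be an integer, ξ ∈ ℂ a primitive n-th root of unity, and τ ∈ ℂ[X] a polynomial in one variable. Let ρ be the ℂ-algebra automorphism of ℂ[x,y] with ρ(x) = ξ·x and ρ(y) = y + τ(ξ·x) − τ(x). Then ρⁿ is the identity, the order of ρ in the automorphism group is exactly n, and if the one-variable polynomial τ(ξ·X) − τ(X) has degree d ≥ 1 then the degree of ρ, namely max(totalDegree ρ(x), totalDegree ρ(y)), equals d. -/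
open MvPolynomial

/-- For `ξ` a primitive `n`-th root of unity (`n ≥ 2`) and `τ ∈ ℂ[X]`, the automorphism
`ρ : x ↦ ξx, y ↦ y + τ(ξx) − τ(x)` satisfies `ρⁿ = 1`, has order exactly `n`, and if
`τ(ξX) − τ(X)` has degree `d ≥ 1` then the degree of `ρ` equals `d`. -/
theorem gamma_automorphism_order_and_degree (n : ℕ) (hn : 2 ≤ n) (ξ : ℂ)
    (hξ : IsPrimitiveRoot ξ n) (τ : Polynomial ℂ)
    (ρ : Rxy ≃ₐ[ℂ] Rxy)
    (hρx : ρ (X 0) = C ξ * X 0)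
    (hρy : ρ (X 1) = X 1 + Polynomial.aeval (C ξ * X 0 : Rxy) τ
      - Polynomial.aeval (X 0 : Rxy) τ) :
    ρ ^ n = 1 ∧ orderOf ρ = n ∧
      ∀ d : ℕ, 1 ≤ d → (τ.comp (Polynomial.C ξ * Polynomial.X) - τ).natDegree = d →
        max (ρ (X 0)).totalDegree (ρ (X 1)).totalDegree = d := by
  -- iterates of ρ
  have key : ∀ k : ℕ, (ρ ^ k) (X 0) = C (ξ ^ k) * X 0 ∧
      (ρ ^ k) (X 1) = X 1 + Polynomial.aeval (C (ξ ^ k) * X 0 : Rxy) τ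
        - Polynomial.aeval (X 0 : Rxy) τ := by
    intro k
    induction k with
    | zero => simp
    | succ k ih =>
      obtain ⟨ih0, ih1⟩ := ih
      have hC : ∀ a : ℂ, ρ (C a) = C a := by
        intro a
        simpa [MvPolynomial.algebraMap_eq] using ρ.commutes a
      have hCX : ρ (C (ξ ^ k) * X 0) = C (ξ ^ (k + 1)) * X 0 := by
        rw [map_mul, hρx, hC, ← mul_assoc, ← C_mul, ← pow_succ]
      constructor
      · rw [pow_succ', AlgEquiv.mul_apply, ih0, hCX]
      · rw [pow_succ', AlgEquiv.mul_apply, ih1, map_sub, map_add, hρy,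
          ← Polynomial.aeval_algHom_apply, ← Polynomial.aeval_algHom_apply, hCX, hρx]
        ring
  have hpow_n : ρ ^ n = 1 := by
    apply AlgEquiv.coe_algHom_injective
    apply MvPolynomial.algHom_ext
    intro i
    fin_cases i
    · simpa [hξ.pow_eq_one] using (key n).1
    · simpa [hξ.pow_eq_one] using (key n).2
  have horder : orderOf ρ = n := by
    have h1 : orderOf ρ ∣ n := orderOf_dvd_of_pow_eq_one hpow_n
    have h0 := (key (orderOf ρ)).1
    rw [pow_orderOf_eq_one] at h0
    have hξm : ξ ^ orderOf ρ = 1 := by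
      have := congrArg (eval (fun _ => 1 : Fin 2 → ℂ)) h0
      simpa using this.symm
    exact Nat.dvd_antisymm h1 (hξ.dvd_of_pow_eq_one _ hξm)
  refine ⟨hpow_n, horder, ?_⟩
  intro d hd hdeg
  set σ : Polynomial ℂ := τ.comp (Polynomial.C ξ * Polynomial.X) - τ with hσdef
  have hσ0 : σ ≠ 0 := by
    intro h
    rw [h, Polynomial.natDegree_zero] at hdeg
    omega
  have hξ0 : ξ ≠ 0 := by
    intro h
    have := hξ.pow_eq_one
    rw [h, zero_pow (by omega : n ≠ 0)] at this
    exact zero_ne_one this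
  -- ρ (X 0) has total degree 1
  have htd0 : (ρ (X 0)).totalDegree = 1 := by
    rw [hρx, X, C_mul_monomial, totalDegree_monomial _ (by simpa using hξ0)]
    simp
  -- ρ (X 1) = X 1 + aeval (X 0) σ
  have haeval : Polynomial.aeval (X 0 : Rxy) σ
      = Polynomial.aeval (C ξ * X 0 : Rxy) τ - Polynomial.aeval (X 0 : Rxy) τ := by
    rw [hσdef, map_sub, Polynomial.aeval_comp]
    congr 2
    simp [MvPolynomial.algebraMap_eq]
  have hρy' : ρ (X 1) = X 1 + Polynomial.aeval (X 0 : Rxy) σ := by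
    rw [hρy, haeval]; ring
  set P : Rxy := Polynomial.aeval (X 0 : Rxy) σ with hPdef
  have hP : P = σ.sum fun e a => C a * X 0 ^ e := by
    rw [hPdef, Polynomial.aeval_def, Polynomial.eval₂_eq_sum]
    rfl
  -- total degree of P is at most d
  have hPle : P.totalDegree ≤ d := by
    rw [hP, Polynomial.sum_def]
    refine totalDegree_finsetSum_le ?_
    intro e he
    refine le_trans (totalDegree_mul _ _) ?_
    rw [totalDegree_C, totalDegree_X_pow, zero_add]
    exact hdeg ▸ Polynomial.le_natDegree_of_mem_supp e he
  -- coefficient of (single 0 d)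
  have hcoeffP : MvPolynomial.coeff (Finsupp.single (0 : Fin 2) d) P = σ.coeff d := by
    rw [hP, Polynomial.sum_def, MvPolynomial.coeff_sum]
    rw [Finset.sum_eq_single d]
    · rw [coeff_C_mul, coeff_X_pow, if_pos rfl, mul_one]
    · intro k _ hk
      rw [coeff_C_mul, coeff_X_pow, if_neg, mul_zero]
      exact fun h => hk (by
        have := Finsupp.single_injective (0 : Fin 2) h
        exact this)
    · intro hdnot
      rw [Polynomial.notMem_support_iff.mp hdnot]
      simp
  have hcoeffX1 : MvPolynomial.coeff (Finsupp.single (0 : Fin 2) d) (X 1 : Rxy) = 0 := by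
    rw [coeff_X', if_neg]
    intro h
    have := DFunLike.congr_fun h (1 : Fin 2)
    simp at this
  have hlead : σ.coeff d ≠ 0 := by
    rw [← hdeg]
    exact Polynomial.leadingCoeff_ne_zero.mpr hσ0
  have hmem : Finsupp.single (0 : Fin 2) d ∈ (X 1 + P).support := by
    rw [MvPolynomial.mem_support_iff, MvPolynomial.coeff_add, hcoeffX1, zero_add, hcoeffP]
    exact hlead
  have hge : d ≤ (X 1 + P).totalDegree := by
    have := le_totalDegree hmem
    simpa using this
  have hle : (X 1 + P).totalDegree ≤ d := by
    refine (totalDegree_add _ _).trans (max_le ?_ hPle)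
    rw [totalDegree_X]
    exact hd
  rw [htd0, hρy', le_antisymm hle hge]
  omega
end

section
/- Let n ≥ 1, ξ ∈ ℂ with ξⁿ = 1, f, g ∈ ℂ[x,y], and τ ∈ ℂ[X]. Let D_n be the derivation of ℂ[x,y] with D_n(x) = f(xⁿ,y) and D_n(y) = n·x^(n-1)·g(xⁿ,y), let π be the ℂ-algebra automorphism with π(x) = x, π(y) = y + τ(x), and set D_G := π⁻¹ ∘ D_n ∘ π. Let ρ be the ℂ-algebra automorphism with ρ(x) = ξ·x and ρ(y) = y + τ(ξ·x) − τ(x). Then ρ ∘ D_G ∘ ρ⁻¹ = ξ⁻¹ • D_G; in particular ρ preserves the foliation defined by D_G. -/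
/-!
Let `μ` be the automorphism `x ↦ ξ⁻¹ x, y ↦ y`. On generators one checks `π ∘ ρ⁻¹ = μ ∘ π`,
so `ρ ∘ D_G ∘ ρ⁻¹` is the `π`-conjugate of `μ⁻¹ ∘ D_n ∘ μ`. The latter is `ξ⁻¹ • D_n`: `μ⁻¹`
fixes `xⁿ` and `y`, hence `f(xⁿ, y)` and `g(xⁿ, y)`, while it sends `x^(n-1)` to
`ξ^(n-1) x^(n-1) = ξ⁻¹ x^(n-1)`.
-/

open MvPolynomial

namespace Derivation

variable {R A : Type*} [CommSemiring R] [CommSemiring A] [Algebra R A]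

noncomputable def conj (e : A ≃ₐ[R] A) (D : Derivation R A A) : Derivation R A A :=
  { toLinearMap := e.symm.toLinearMap ∘ₗ D.toLinearMap ∘ₗ e.toLinearMap
    map_one_eq_zero' := by simp
    leibniz' := fun a b => by simp [Derivation.leibniz] }

@[simp]
lemma conj_apply (e : A ≃ₐ[R] A) (D : Derivation R A A) (a : A) :
    conj e D a = e.symm (D (e a)) := rfl

lemma conj_trans (e f : A ≃ₐ[R] A) (D : Derivation R A A) :
    conj (e.trans f) D = conj e (conj f D) := by
  ext a; simp

lemma conj_smul (e : A ≃ₐ[R] A) (c : R) (D : Derivation R A A) :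
    conj e (c • D) = c • conj e D := by
  ext a; simp

end Derivation

namespace MvPolynomial

variable {σ R : Type*} [CommSemiring R]

noncomputable def scaleVars (w : σ → Rˣ) : MvPolynomial σ R ≃ₐ[R] MvPolynomial σ R :=
  AlgEquiv.ofAlgHom (aeval fun i => C (w i : R) * X i) (aeval fun i => C (↑(w i)⁻¹ : R) * X i)
    (by ext i; simp [← mul_assoc, ← C_mul]) (by ext i; simp [← mul_assoc, ← C_mul])

@[simp]
lemma scaleVars_X (w : σ → Rˣ) (i : σ) : scaleVars w (X i) = C (w i : R) * X i := by
  simp [scaleVars]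

@[simp]
lemma scaleVars_symm_X (w : σ → Rˣ) (i : σ) :
    (scaleVars w).symm (X i) = C (↑(w i)⁻¹ : R) * X i := by
  simp [scaleVars]

lemma algHom_aeval_eq_self {A : Type*} [CommSemiring A] [Algebra R A] (φ : A →ₐ[R] A)
    (v : σ → A) (hv : ∀ i, φ (v i) = v i) (p : MvPolynomial σ R) :
    φ (aeval v p) = aeval v p := by
  rw [comp_aeval_apply]
  simp only [hv]

end MvPolynomial

section Plane

variable {R : Type*} [CommRing R]

local notation:9000 R "[x,y]" => MvPolynomial (Fin 2) R

lemma conj_scaleVars_eq_smul {n : ℕ} (hn : 1 ≤ n) {u : Rˣ} (hu : (u : R) ^ n = 1)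
    {f g : R[x,y]} {D : Derivation R (R[x,y]) (R[x,y])}
    (hDx : D (X 0) = aeval ![(X 0 : R[x,y]) ^ n, X 1] f)
    (hDy : D (X 1) = (n : R[x,y]) * X 0 ^ (n - 1) * aeval ![(X 0 : R[x,y]) ^ n, X 1] g) :
    D.conj (scaleVars ![u⁻¹, 1]) = (↑u⁻¹ : R) • D := by
  have hpow : (u : R) ^ (n - 1) = ↑u⁻¹ :=
    Units.eq_inv_of_mul_eq_one_left (by rw [← pow_succ', Nat.sub_add_cancel hn, hu])
  have hfix : ∀ p : R[x,y], (scaleVars ![u⁻¹, 1]).symm (aeval ![(X 0 : R[x,y]) ^ n, X 1] p) =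
      aeval ![(X 0 : R[x,y]) ^ n, X 1] p := by
    refine algHom_aeval_eq_self (scaleVars ![u⁻¹, 1]).symm.toAlgHom _ fun i => ?_
    fin_cases i <;> simp [← smul_eq_C_mul, smul_pow, hu]
  refine derivation_ext (Fin.forall_fin_two.2 ⟨?_, ?_⟩)
  · simp only [Derivation.conj_apply, scaleVars_X, ← smul_eq_C_mul, Matrix.cons_val_zero,
      Derivation.map_smul, map_smul, hDx, hfix, Derivation.smul_apply]
  · simp only [Derivation.conj_apply, scaleVars_X, scaleVars_symm_X, ← smul_eq_C_mul,
      Matrix.cons_val_one, Matrix.cons_val_zero, Units.val_one, one_smul, hDy, map_mul, map_pow,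
      map_natCast, hfix, smul_pow, inv_inv, hpow, Derivation.smul_apply, mul_smul_comm,
      smul_mul_assoc]

lemma symm_trans_eq_trans_scaleVars {τ : Polynomial R} {u : Rˣ}
    {π ρ : R[x,y] ≃ₐ[R] R[x,y]} (hπx : π (X 0) = X 0)
    (hπy : π (X 1) = X 1 + Polynomial.aeval (X 0 : R[x,y]) τ)
    (hρx : ρ (X 0) = C (u : R) * X 0)
    (hρy : ρ (X 1) = X 1 + Polynomial.aeval (C (u : R) * X 0 : R[x,y]) τ
      - Polynomial.aeval (X 0 : R[x,y]) τ) :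
    ρ.symm.trans π = π.trans (scaleVars ![u⁻¹, 1]) := by
  have h : (ρ.trans (π.trans (scaleVars ![u⁻¹, 1]))).toAlgHom = π.toAlgHom := by
    refine algHom_ext (Fin.forall_fin_two.2 ⟨?_, ?_⟩)
    · simp [hπx, hρx, ← smul_eq_C_mul, smul_smul]
    · simp only [AlgEquiv.coe_toAlgHom, AlgEquiv.trans_apply, hρy, ← smul_eq_C_mul, map_sub,
        map_add, hπy, ← Polynomial.aeval_algHom_apply, map_smul, hπx, scaleVars_X,
        Matrix.cons_val_one, Matrix.cons_val_zero, Units.val_one, C_1, one_mul, smul_smul,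
        Units.mul_inv, one_smul]
      ring
  refine AlgEquiv.ext fun a => ?_
  simpa using (DFunLike.congr_fun h (ρ.symm a)).symm

end Plane

/-- Let `D_n = f(xⁿ,y) ∂x + n x^(n-1) g(xⁿ,y) ∂y`, `π : x ↦ x, y ↦ y + τ(x)`,
`D_G = π⁻¹ ∘ D_n ∘ π`, and `ρ : x ↦ ξx, y ↦ y + τ(ξx) − τ(x)` with `ξⁿ = 1`.
Then `ρ ∘ D_G ∘ ρ⁻¹ = ξ⁻¹ • D_G`: `ρ` preserves the foliation defined by `D_G`. -/
theorem gamma_preserves_conjugated_pullback (n : ℕ) (hn : 1 ≤ n) (ξ : ℂ) (hξ : ξ ^ n = 1)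
    (f g : Rxy) (τ : Polynomial ℂ)
    (Dn : Derivation ℂ Rxy Rxy)
    (hDnx : Dn (X 0) = aeval ![(X 0 : Rxy) ^ n, X 1] f)
    (hDny : Dn (X 1) = (n : Rxy) * X 0 ^ (n - 1) * aeval ![(X 0 : Rxy) ^ n, X 1] g)
    (π : Rxy ≃ₐ[ℂ] Rxy) (hπx : π (X 0) = X 0)
    (hπy : π (X 1) = X 1 + Polynomial.aeval (X 0 : Rxy) τ)
    (ρ : Rxy ≃ₐ[ℂ] Rxy) (hρx : ρ (X 0) = C ξ * X 0)
    (hρy : ρ (X 1) = X 1 + Polynomial.aeval (C ξ * X 0 : Rxy) τ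
      - Polynomial.aeval (X 0 : Rxy) τ) :
    ∀ a : Rxy, ρ (π.symm (Dn (π (ρ.symm a)))) = ξ⁻¹ • π.symm (Dn (π a)) := by
  obtain ⟨u, rfl⟩ : IsUnit ξ := IsUnit.of_pow_eq_one hξ (by omega)
  have hcomm := symm_trans_eq_trans_scaleVars (u := u) hπx hπy hρx hρy
  intro a
  calc ρ (π.symm (Dn (π (ρ.symm a)))) = Dn.conj (ρ.symm.trans π) a := rfl
    _ = ((Dn.conj (scaleVars ![u⁻¹, 1])).conj π) a := by rw [hcomm, Derivation.conj_trans]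
    _ = _ := by
      rw [conj_scaleVars_eq_smul hn hξ hDnx hDny, Derivation.conj_smul, Units.val_inv_eq_inv_val,
        Derivation.smul_apply, Derivation.conj_apply]
end

section
/- Let D be a nonzero derivation of ℂ[x,y]. Then D is simple (the only ideals I with D(I) ⊆ I are 0 and ℂ[x,y]) if and only if both of the following hold: (a) the ideal of ℂ[x,y] generated by D(x) and D(y) is the unit ideal (the associated vector field has no zeroes), and (b) D admits no Darboux polynomial, i.e., there is no nonzero non-unit h ∈ ℂ[x,y] with D(h) contained in the principal ideal generated by h (the associated foliation has no invariant algebraic curve). -/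
/-!
A zero `p` of the vector field makes the maximal ideal of `p` invariant, and a Darboux polynomial
`h` makes `(h)` invariant, so a simple derivation has neither.

Conversely, in characteristic zero the radical of an invariant ideal is invariant, hence so are its
finitely many minimal primes. Let `P` be a minimal prime of a proper nonzero invariant ideal and
`q ∈ P` a prime element. If `q` divided all of `P`, comparing `q`-adic valuations in
`D (q ^ n * u) ∈ P` for an element `q ^ n * u` of least valuation would give `q ∣ D q`, a Darboux
polynomial. So `P` contains an element prime to `q`, the chain `0 ⊊ (q) ⊊ P` and
`dim ℂ[x,y] = 2` make `P` maximal, and by the Nullstellensatz `P` is the ideal of a point where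
`D x` and `D y` vanish.
-/

open MvPolynomial

theorem Ideal.mem_of_nsmul_mem {R : Type*} [CommRing R] [Algebra ℚ R] {I : Ideal R} {n : ℕ}
    (hn : n ≠ 0) {z : R} (h : n • z ∈ I) : z ∈ I := by
  have := I.mul_mem_left (algebraMap ℚ R (n : ℚ)⁻¹) h
  rwa [nsmul_eq_mul, ← mul_assoc, ← map_natCast (algebraMap ℚ R), ← map_mul,
    inv_mul_cancel₀ (by exact_mod_cast hn), map_one, one_mul] at this

theorem Ideal.exists_notMem_forall_mul_mem_radical {R : Type*} [CommRing R] [IsNoetherianRing R]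
    {I P : Ideal R} (hP : P ∈ I.minimalPrimes) : ∃ b ∉ P, ∀ a ∈ P, a * b ∈ I.radical := by
  classical
  have hfin := (I.finite_minimalPrimes_of_isNoetherianRing R).sdiff (t := {P})
  obtain ⟨b, hb, hbP⟩ : ∃ b ∈ hfin.toFinset.inf id, b ∉ P := by
    by_contra! hle
    obtain ⟨Q, hQ, hQP⟩ := (hP.isPrime.inf_le' (s := hfin.toFinset) (f := id)).mp hle
    rw [Set.Finite.mem_toFinset] at hQ
    exact hQ.2 (le_antisymm hQP (hP.2 hQ.1.1 hQP))
  refine ⟨b, hbP, fun a ha => ?_⟩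
  rw [← Ideal.sInf_minimalPrimes, Ideal.mem_sInf]
  intro Q hQ
  by_cases hQP : Q = P
  · subst hQP
    exact Q.mul_mem_right b ha
  · exact Q.mul_mem_left a (Finset.inf_le (f := id) (hfin.mem_toFinset.mpr ⟨hQ, hQP⟩) hb)

theorem Ideal.exists_pow_mul_mem_and_pow_dvd_of_ne_bot {R : Type*} [CommRing R] [IsDomain R]
    [WfDvdMonoid R] {I : Ideal R} (hI : I ≠ ⊥) {p : R} (hp : Prime p) :
    ∃ n u, ¬ p ∣ u ∧ p ^ n * u ∈ I ∧ ∀ g ∈ I, p ^ n ∣ g := by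
  classical
  obtain ⟨f₀, hf₀, hf₀0⟩ := Submodule.exists_mem_ne_zero_of_ne_bot hI
  have hex : ∃ n, ∃ f ∈ I, f ≠ 0 ∧ multiplicity p f = n := ⟨_, f₀, hf₀, hf₀0, rfl⟩
  obtain ⟨f, hf, hf0, hfn⟩ := Nat.find_spec hex
  obtain ⟨u, hfu, hpu⟩ := (FiniteMultiplicity.of_prime_left hp hf0).exists_eq_pow_mul_and_not_dvd
  refine ⟨Nat.find hex, u, hpu, hfn ▸ hfu ▸ hf, fun g hg => ?_⟩
  rcases eq_or_ne g 0 with rfl | hg0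
  · exact dvd_zero _
  · exact (pow_dvd_pow p (Nat.find_min' hex ⟨g, hg, hg0, rfl⟩)).trans (pow_multiplicity_dvd p g)

theorem Ideal.IsPrime.isMaximal_of_prime_mem_of_not_dvd {R : Type*} [CommRing R] [IsDomain R]
    (hdim : ringKrullDim R ≤ 2) {P : Ideal R} (hP : P.IsPrime) {q f : R} (hq : Prime q)
    (hqP : q ∈ P) (hfP : f ∈ P) (hqf : ¬ q ∣ f) : P.IsMaximal := by
  have : (Ideal.span {q}).IsPrime := (Ideal.span_singleton_prime hq.ne_zero).mpr hq
  have hbot : ⊥ < Ideal.span {q} := by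
    rw [bot_lt_iff_ne_bot, Ne, Ideal.span_singleton_eq_bot]
    exact hq.ne_zero
  have hqP' : Ideal.span {q} < P := SetLike.lt_iff_le_and_exists.mpr
    ⟨(Ideal.span_singleton_le_iff_mem P).mpr hqP, f, hfP, by rwa [Ideal.mem_span_singleton]⟩
  have h1 := Ideal.height_add_one_le_of_lt_of_isPrime hbot
  have h2 := Ideal.height_add_one_le_of_lt_of_isPrime hqP'
  rw [Ideal.height_bot, zero_add] at h1
  obtain ⟨M, hM, hPM⟩ := P.exists_le_maximal hP.ne_top
  rcases hPM.lt_or_eq with hlt | rfl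
  · have h3 := Ideal.height_add_one_le_of_lt_of_isPrime hlt
    have h4 : (M.height : WithBot ℕ∞) ≤ (2 : ℕ∞) :=
      (M.height_le_ringKrullDim_of_ne_top hM.ne_top).trans hdim
    have : (3 : ℕ∞) ≤ 2 :=
      calc (3 : ℕ∞) = 1 + 1 + 1 := by norm_num
        _ ≤ (Ideal.span {q}).height + 1 + 1 := by gcongr
        _ ≤ P.height + 1 := by gcongr
        _ ≤ M.height := h3
        _ ≤ 2 := WithBot.coe_le_coe.mp h4
    exact absurd this (by decide)
  · exact hM

namespace Derivation

variable {A R : Type*} [CommRing A] [CommRing R] [Algebra A R] (D : Derivation A R R)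

theorem mul_map_pow (a : R) (n : ℕ) : a * D (a ^ n) = n • (a ^ n * D a) := by
  cases n with
  | zero => simp
  | succ n => simp only [leibniz_pow, Nat.add_sub_cancel, smul_eq_mul, nsmul_eq_mul]; ring

theorem map_mem_span_singleton {b : R} (hb : D b ∈ Ideal.span {b}) {a : R}
    (ha : a ∈ Ideal.span {b}) : D a ∈ Ideal.span {b} := by
  obtain ⟨c, rfl⟩ := Ideal.mem_span_singleton'.mp ha
  rw [leibniz, smul_eq_mul, smul_eq_mul]
  exact Ideal.add_mem _ (Ideal.mul_mem_left _ _ hb)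
    (Ideal.mul_mem_right _ _ (Ideal.mem_span_singleton_self b))

variable [Algebra ℚ R] {I : Ideal R}

theorem pow_mul_map_pow_mem {a : R} (hI : ∀ x ∈ I, D x ∈ I) (m k : ℕ)
    (h : a ^ (m + 1) * D a ^ k ∈ I) : a ^ m * D a ^ (k + 2) ∈ I := by
  refine Ideal.mem_of_nsmul_mem m.succ_ne_zero ?_
  have key : (m + 1) • (a ^ m * D a ^ (k + 2)) =
      D a * D (a ^ (m + 1) * D a ^ k) - k • (a ^ (m + 1) * D a ^ k * D (D a)) := by
    have h1 := D.mul_map_pow (D a) k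
    have h2 : D (a ^ (m + 1)) = (m + 1) • (a ^ m * D a) := by simp [leibniz_pow]
    rw [leibniz, h2, smul_eq_mul, smul_eq_mul]
    simp only [nsmul_eq_mul] at h1 ⊢
    linear_combination -(a ^ (m + 1)) * h1
  rw [key]
  exact I.sub_mem (I.mul_mem_left _ (hI _ h)) (nsmul_mem (I.mul_mem_right _ h) _)

theorem map_mem_radical (hI : ∀ x ∈ I, D x ∈ I) {a : R} (ha : a ∈ I.radical) :
    D a ∈ I.radical := by
  obtain ⟨n, hn⟩ := ha
  have step : ∀ t m k, a ^ (m + t) * D a ^ k ∈ I → a ^ m * D a ^ (k + 2 * t) ∈ I := by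
    intro t
    induction t with
    | zero => simp
    | succ t ih =>
      intro m k h
      have := D.pow_mul_map_pow_mem hI m (k + 2 * t) (ih (m + 1) k (by rwa [add_right_comm]))
      rwa [add_assoc] at this
  exact ⟨2 * n, by simpa using step n 0 0 (by simpa using hn)⟩

theorem map_mem_of_mem_minimalPrimes [IsNoetherianRing R] (hI : ∀ x ∈ I, D x ∈ I) {P : Ideal R}
    (hP : P ∈ I.minimalPrimes) {a : R} (ha : a ∈ P) : D a ∈ P := by
  obtain ⟨b, hbP, hb⟩ := Ideal.exists_notMem_forall_mul_mem_radical hP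
  have hrad : I.radical ≤ P := hP.isPrime.radical_le_iff.mpr hP.le
  have hab : a * D b + b * D a ∈ P := by
    simpa only [leibniz, smul_eq_mul] using hrad (D.map_mem_radical hI (hb a ha))
  have hbDa : b * D a ∈ P := (P.add_mem_iff_right (P.mul_mem_right _ ha)).mp hab
  exact (hP.isPrime.mem_or_mem hbDa).resolve_left hbP

theorem prime_dvd_map_of_pow_dvd [IsDomain R] {p u : R} (hp : Prime p) (hpu : ¬ p ∣ u) {n : ℕ}
    (hn : n ≠ 0) (h : p ^ n ∣ D (p ^ n * u)) : p ∣ D p := by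
  obtain ⟨n, rfl⟩ := Nat.exists_eq_succ_of_ne_zero hn
  have key : D (p ^ (n + 1) * u) = p ^ n * ((n + 1) • (u * D p)) + p ^ (n + 1) * D u := by
    simp only [leibniz, leibniz_pow, smul_eq_mul, nsmul_eq_mul, Nat.add_sub_cancel]
    push_cast
    ring
  rw [key, pow_succ, dvd_add_left (dvd_mul_right _ _)] at h
  have := Ideal.mem_of_nsmul_mem n.succ_ne_zero <| Ideal.mem_span_singleton.mpr <|
    (mul_dvd_mul_iff_left (pow_ne_zero n hp.ne_zero)).mp h
  exact (hp.dvd_or_dvd (Ideal.mem_span_singleton.mp this)).resolve_left hpu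

theorem prime_dvd_map_of_forall_dvd [IsDomain R] [WfDvdMonoid R] (hI : ∀ x ∈ I, D x ∈ I)
    (hI0 : I ≠ ⊥) {p : R} (hp : Prime p) (hdvd : ∀ g ∈ I, p ∣ g) : p ∣ D p := by
  obtain ⟨n, u, hpu, hmem, hpow⟩ := Ideal.exists_pow_mul_mem_and_pow_dvd_of_ne_bot hI0 hp
  refine D.prime_dvd_map_of_pow_dvd hp hpu ?_ (hpow _ (hI _ hmem))
  rintro rfl
  exact hpu (by simpa using hdvd _ hmem)

theorem exists_isMaximal_forall_map_mem [IsDomain R] [UniqueFactorizationMonoid R]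
    [IsNoetherianRing R] (hdim : ringKrullDim R ≤ 2) (hD : ∀ q : R, Prime q → ¬ q ∣ D q)
    (hI : ∀ x ∈ I, D x ∈ I) (hI0 : I ≠ ⊥) (hItop : I ≠ ⊤) :
    ∃ P : Ideal R, P.IsMaximal ∧ ∀ a ∈ P, D a ∈ P := by
  obtain ⟨P, hP⟩ := Ideal.nonempty_minimalPrimes hItop
  have hPinv : ∀ a ∈ P, D a ∈ P := fun _ => D.map_mem_of_mem_minimalPrimes hI hP
  have hP0 : P ≠ ⊥ := fun h => hI0 (eq_bot_iff.mpr (h ▸ hP.le))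
  obtain ⟨q, hqP, hq⟩ := hP.isPrime.exists_mem_prime_of_ne_bot hP0
  obtain ⟨f, hfP, hqf⟩ : ∃ f ∈ P, ¬ q ∣ f := by
    by_contra! hall
    exact hD q hq (D.prime_dvd_map_of_forall_dvd hPinv hP0 hq hall)
  exact ⟨P, hP.isPrime.isMaximal_of_prime_mem_of_not_dvd hdim hq hqP hfP hqf, hPinv⟩

end Derivation

namespace MvPolynomial

theorem derivation_mem_of_forall_X_mem {σ R : Type*} [CommRing R]
    (D : Derivation R (MvPolynomial σ R) (MvPolynomial σ R)) {I : Ideal (MvPolynomial σ R)}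
    (h : ∀ i, D (X i) ∈ I) (a : MvPolynomial σ R) : D a ∈ I := by
  induction a using MvPolynomial.induction_on with
  | C c => simp
  | add p q hp hq => simpa using I.add_mem hp hq
  | mul_X p i hp =>
    rw [D.leibniz, smul_eq_mul, smul_eq_mul]
    exact I.add_mem (I.mul_mem_left _ (h i)) (I.mul_mem_left _ hp)

theorem X_sub_C_ne_zero {σ R : Type*} [CommRing R] [Nontrivial R] (i : σ) (c : R) :
    X i - C c ≠ 0 := fun h => by
  simpa using congrArg (eval fun _ => c + 1) h

theorem exists_X_sub_C_mem_of_isMaximal {σ k : Type*} [Field k] [IsAlgClosed k] [Finite σ]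
    {m : Ideal (MvPolynomial σ k)} (hm : m.IsMaximal) : ∃ x : σ → k, ∀ i, X i - C (x i) ∈ m := by
  obtain ⟨x, rfl⟩ := isMaximal_iff_eq_vanishingIdeal_singleton.mp hm
  exact ⟨x, fun i => by simp⟩

theorem derivation_map_mem_iff_of_isMaximal {σ k : Type*} [Field k] [IsAlgClosed k] [Finite σ]
    (D : Derivation k (MvPolynomial σ k) (MvPolynomial σ k)) {m : Ideal (MvPolynomial σ k)}
    (hm : m.IsMaximal) : (∀ a ∈ m, D a ∈ m) ↔ ∀ i, D (X i) ∈ m := by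
  obtain ⟨x, hx⟩ := exists_X_sub_C_mem_of_isMaximal hm
  exact ⟨fun h i => by simpa using h _ (hx i), fun h a _ => derivation_mem_of_forall_X_mem D h a⟩

end MvPolynomial

theorem simple_iff_no_zeroes_and_no_darboux_general (D : Derivation ℂ Rxy Rxy) :
    IsSimpleDer D ↔
      (Ideal.span {D (X 0), D (X 1)} = ⊤ ∧
        ¬ ∃ h : Rxy, h ≠ 0 ∧ ¬ IsUnit h ∧ D h ∈ Ideal.span {h}) := by
  have hspan (J : Ideal Rxy) : Ideal.span {D (X 0), D (X 1)} ≤ J ↔ ∀ i, D (X i) ∈ J := by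
    simp [Ideal.span_le, Set.insert_subset_iff, Fin.forall_fin_two]
  constructor
  · intro hs
    refine ⟨?_, ?_⟩
    · by_contra hne
      obtain ⟨m, hm, hle⟩ := Ideal.exists_le_maximal _ hne
      obtain ⟨x, hx⟩ := exists_X_sub_C_mem_of_isMaximal hm
      rcases hs m ((derivation_map_mem_iff_of_isMaximal D hm).mpr ((hspan m).mp hle)) with h | h
      · exact X_sub_C_ne_zero 0 (x 0) (Ideal.mem_bot.mp (h ▸ hx 0))
      · exact hm.ne_top h
    · rintro ⟨h, h0, hu, hDh⟩
      rcases hs _ fun _ => D.map_mem_span_singleton hDh with h' | h'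
      · exact h0 (Ideal.span_singleton_eq_bot.mp h')
      · exact hu (Ideal.span_singleton_eq_top.mp h')
  · rintro ⟨hzero, hdarboux⟩ I hI
    by_contra! hI'
    have hprime (q : Rxy) (hq : Prime q) : ¬ q ∣ D q := fun hdvd =>
      hdarboux ⟨q, hq.ne_zero, hq.not_isUnit, Ideal.mem_span_singleton.mpr hdvd⟩
    obtain ⟨P, hP, hPinv⟩ := D.exists_isMaximal_forall_map_mem (by simp) hprime hI hI'.1 hI'.2
    have hle := (hspan P).mpr ((derivation_map_mem_iff_of_isMaximal D hP).mp hPinv)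
    exact hP.ne_top (eq_top_iff.mpr (hzero ▸ hle))

/-- A nonzero derivation `D` of `ℂ[x,y]` is simple if and only if (a) the ideal generated
by `D(x)` and `D(y)` is the unit ideal (the vector field has no zeroes), and (b) `D` has
no Darboux polynomial (the foliation has no invariant algebraic curve). -/
theorem simple_iff_no_zeroes_and_no_darboux (D : Derivation ℂ Rxy Rxy) (hD : D ≠ 0) :
    IsSimpleDer D ↔
      (Ideal.span {D (X 0), D (X 1)} = ⊤ ∧
        ¬ ∃ h : Rxy, h ≠ 0 ∧ ¬ IsUnit h ∧ D h ∈ Ideal.span {h}) :=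
  simple_iff_no_zeroes_and_no_darboux_general D
end

section
/- Let D be a nonzero derivation of ℂ[x,y] such that D(x) and D(y) have no common non-unit divisor (the vector field D(x)∂x + D(y)∂y has isolated zeroes). Let σ be a ℂ-algebra automorphism of ℂ[x,y] and suppose there exists an element h of the fraction field ℂ(x,y) such that, for every a ∈ ℂ[x,y], the image of (σ ∘ D ∘ σ⁻¹)(a) in ℂ(x,y) equals h times the image of D(a). Then h is a nonzero constant: there exists c ∈ ℂ, c ≠ 0, with h = c. -/
open MvPolynomial

lemma unit_eq_C {p : Rxy} (hp : IsUnit p) : ∃ c : ℂ, c ≠ 0 ∧ p = C c := by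
  have key : ∀ (n : ℕ) (x : MvPolynomial (Fin (n + 1)) ℂ) (a : ℂ),
      finSuccEquiv ℂ n x = Polynomial.C (C a) → x = C a := by
    intro n x a hx
    have h2 := RingHom.congr_fun (finSuccEquiv_comp_C_eq_C (R := ℂ) n) a
    simp only [RingHom.comp_apply, RingHom.coe_coe] at h2
    calc x = (finSuccEquiv ℂ n).symm (finSuccEquiv ℂ n x) :=
            ((finSuccEquiv ℂ n).symm_apply_apply x).symm
      _ = C a := by rw [hx]; exact h2
  obtain ⟨q, hq, hqe⟩ := Polynomial.isUnit_iff.mp (hp.map (finSuccEquiv ℂ 1))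
  obtain ⟨q0, hq0, hq0e⟩ := Polynomial.isUnit_iff.mp (hq.map (finSuccEquiv ℂ 0))
  set e := isEmptyAlgEquiv ℂ (Fin 0) with he
  set c := e q0 with hc
  have hcu : IsUnit c := hq0.map e
  have hq0C : q0 = C c := by
    have h1 : e.symm (algebraMap ℂ ℂ c) = algebraMap ℂ (MvPolynomial (Fin 0) ℂ) c :=
      e.symm.commutes c
    have h2 : e.symm c = q0 := by rw [hc, e.symm_apply_apply]
    rw [← h2]
    have : (algebraMap ℂ ℂ) c = c := rfl
    rw [this] at h1
    rw [h1, MvPolynomial.algebraMap_eq]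
  have hqC : q = C c := key 0 q c (by rw [← hq0e, hq0C])
  have hpC : p = C c := key 1 p c (by rw [← hqe, hqC])
  exact ⟨c, by simpa using hcu.ne_zero, hpC⟩

lemma deriv_mem_span (D : Derivation ℂ Rxy Rxy) (u v : Rxy)
    (htop : Algebra.adjoin ℂ ({u, v} : Set Rxy) = ⊤) (a : Rxy) :
    D a ∈ Submodule.span Rxy ({D u, D v} : Set Rxy) := by
  have ha : a ∈ Algebra.adjoin ℂ ({u, v} : Set Rxy) := htop ▸ Algebra.mem_top
  refine Algebra.adjoin_induction
    (p := fun x _ => D x ∈ Submodule.span Rxy ({D u, D v} : Set Rxy)) ?_ ?_ ?_ ?_ ha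
  · rintro x (rfl | rfl)
    · exact Submodule.subset_span (Set.mem_insert _ _)
    · exact Submodule.subset_span (Set.mem_insert_of_mem _ rfl)
  · intro r; rw [Derivation.map_algebraMap]; exact zero_mem _
  · intro x y _ _ hx hy; rw [map_add]; exact add_mem hx hy
  · intro x y _ _ hx hy
    rw [Derivation.leibniz]
    exact add_mem (Submodule.smul_mem _ _ hy) (Submodule.smul_mem _ _ hx)

/-- If `D` is a nonzero derivation of `ℂ[x,y]` whose components `D(x)`, `D(y)` have no
common non-unit divisor, and `σ` is an automorphism such that `σ ∘ D ∘ σ⁻¹ = h · D` for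
some element `h` of the fraction field `ℂ(x,y)`, then `h` is a nonzero constant. -/
theorem conjugation_factor_is_constant (D : Derivation ℂ Rxy Rxy) (hD : D ≠ 0)
    (hcop : ∀ p : Rxy, p ∣ D (X 0) → p ∣ D (X 1) → IsUnit p)
    (σ : Rxy ≃ₐ[ℂ] Rxy) (h : FractionRing Rxy)
    (hh : ∀ a : Rxy,
      algebraMap Rxy (FractionRing Rxy) (σ (D (σ.symm a)))
        = h * algebraMap Rxy (FractionRing Rxy) (D a)) :
    ∃ c : ℂ, c ≠ 0 ∧ h = algebraMap Rxy (FractionRing Rxy) (C c) := by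
  classical
  set φ : Rxy →+* FractionRing Rxy := algebraMap Rxy (FractionRing Rxy) with hφ
  have hinj : Function.Injective φ := IsFractionRing.injective Rxy (FractionRing Rxy)
  -- numerator and denominator of h
  set n := IsFractionRing.num Rxy h with hn
  set d : Rxy := (IsFractionRing.den Rxy h : Rxy) with hd
  have hred : IsRelPrime n d := IsFractionRing.num_den_reduced Rxy h
  have hd0 : φ d ≠ 0 := by
    have : d ≠ 0 := nonZeroDivisors.coe_ne_zero _
    simpa [map_eq_zero_iff φ hinj] using this
  have hnum : φ n = h * φ d := by
    have := IsFractionRing.mk'_num_den' Rxy h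
    rw [div_eq_iff hd0] at this
    exact this
  -- E i := σ (D (σ.symm (X i)))
  set E : Fin 2 → Rxy := fun i => σ (D (σ.symm (X i))) with hE
  -- key polynomial identity
  have hkey : ∀ i, n * D (X i) = d * E i := by
    intro i
    apply hinj
    rw [map_mul, map_mul, hnum, hE]
    rw [show φ (σ (D (σ.symm (X i)))) = h * φ (D (X i)) from hh (X i)]
    ring
  -- the denominator divides both components of D, hence is a unit
  have hddvd : ∀ i, d ∣ D (X i) := fun i =>
    hred.symm.dvd_of_dvd_mul_left ⟨E i, hkey i⟩
  have hdu : IsUnit d := hcop d (hddvd 0) (hddvd 1)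
  obtain ⟨ud, hud⟩ := hdu
  set r : Rxy := (↑ud⁻¹ : Rxy) * n with hr
  have hrd : r * d = n := by
    rw [hr, ← hud, mul_comm ((↑ud⁻¹ : Rxy)) n, mul_assoc, Units.inv_mul, mul_one]
  have hhr : h = φ r := by
    have : φ r * φ d = h * φ d := by rw [← map_mul, hrd, hnum]
    exact (mul_right_cancel₀ hd0 this).symm
  -- E i = r * D (X i)
  have hEi : ∀ i, E i = r * D (X i) := by
    intro i
    apply hinj
    rw [map_mul, ← hhr, hE]
    exact hh (X i)
  -- coprimality of the components of E
  set u := σ.symm (X 0) with hu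
  set v := σ.symm (X 1) with hv
  have htop : Algebra.adjoin ℂ ({u, v} : Set Rxy) = ⊤ := by
    have h1 : Algebra.adjoin ℂ ({X 0, X 1} : Set Rxy) = ⊤ := by
      have h2 := MvPolynomial.adjoin_range_X (R := ℂ) (σ := Fin 2)
      have h3 : Set.range (X : Fin 2 → Rxy) = {X 0, X 1} := by
        ext p
        constructor
        · rintro ⟨i, rfl⟩
          fin_cases i
          · exact Set.mem_insert _ _
          · exact Set.mem_insert_of_mem _ rfl
        · rintro (rfl | rfl)
          exacts [⟨0, rfl⟩, ⟨1, rfl⟩]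
      rwa [h3] at h2
    have h4 : ({u, v} : Set Rxy) = (σ.symm : Rxy →ₐ[ℂ] Rxy) '' {X 0, X 1} := by
      rw [Set.image_insert_eq, Set.image_singleton]; rfl
    rw [h4, ← AlgHom.map_adjoin, h1, Algebra.map_top, AlgHom.range_eq_top]
    exact σ.symm.surjective
  have hspan : ∀ a : Rxy, D a ∈ Submodule.span Rxy ({D u, D v} : Set Rxy) :=
    deriv_mem_span D u v htop
  have hEcop : ∀ p : Rxy, p ∣ E 0 → p ∣ E 1 → IsUnit p := by
    intro p h0 h1
    have h0' : σ.symm p ∣ D u := by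
      have := map_dvd (σ.symm : Rxy →+* Rxy) h0
      simpa [hE, hu] using this
    have h1' : σ.symm p ∣ D v := by
      have := map_dvd (σ.symm : Rxy →+* Rxy) h1
      simpa [hE, hv] using this
    have hdvdD : ∀ a : Rxy, σ.symm p ∣ D a := by
      intro a
      obtain ⟨c1, c2, hc⟩ := Submodule.mem_span_pair.mp (hspan a)
      rw [← hc]
      exact dvd_add (Dvd.dvd.mul_left h0' c1) (Dvd.dvd.mul_left h1' c2)
    have : IsUnit (σ.symm p) := hcop _ (hdvdD (X 0)) (hdvdD (X 1))
    have := this.map (σ : Rxy →+* Rxy)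
    simpa using this
  -- r is a unit
  have hru : IsUnit r := hEcop r ⟨D (X 0), hEi 0⟩ ⟨D (X 1), hEi 1⟩
  obtain ⟨c, hc0, hcr⟩ := unit_eq_C hru
  exact ⟨c, hc0, by rw [hhr, hcr]⟩
end

section
/- Let f, g ∈ ℂ[x,y], let D be the derivation of ℂ[x,y] with D(x) = f and D(y) = g, and let σ be a ℂ-algebra automorphism of ℂ[x,y]. Set P = σ(x), Q = σ(y), and let J = (∂P/∂x)(∂Q/∂y) − (∂P/∂y)(∂Q/∂x) be the Jacobian determinant. Then σ commutes with D (i.e., σ(D(a)) = D(σ(a)) for all a ∈ ℂ[x,y]) if and only if the two polynomial identities σ(g)·(∂P/∂x) − σ(f)·(∂Q/∂x) = J·g and σ(g)·(∂P/∂y) − σ(f)·(∂Q/∂y) = −J·f hold. -/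
open MvPolynomial

namespace Derivation

variable {R A B : Type*} [CommSemiring R] [CommSemiring A] [CommSemiring B]
  [Algebra R A] [Algebra R B]

def conjAlgEquiv (σ : A ≃ₐ[R] B) (D : Derivation R A A) : Derivation R B B where
  toLinearMap := σ.toLinearMap ∘ₗ D.toLinearMap ∘ₗ σ.symm.toLinearMap
  map_one_eq_zero' := by simp
  leibniz' a b := by simp

theorem conjAlgEquiv_apply (σ : A ≃ₐ[R] B) (D : Derivation R A A) (b : B) :
    conjAlgEquiv σ D b = σ (D (σ.symm b)) := rfl

end Derivation

namespace MvPolynomial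

section CommSemiring

variable {R ι κ : Type*} [CommSemiring R]

theorem _root_.AlgEquiv.commute_derivation_iff (σ : MvPolynomial ι R ≃ₐ[R] MvPolynomial ι R)
    (D : Derivation R (MvPolynomial ι R) (MvPolynomial ι R)) :
    (∀ a, σ (D a) = D (σ a)) ↔ ∀ i, σ (D (X i)) = D (σ (X i)) := by
  refine ⟨fun h i => h (X i), fun h a => ?_⟩
  have hconj : Derivation.conjAlgEquiv σ.symm D = D := derivation_ext fun i => by
    simp [Derivation.conjAlgEquiv_apply, ← h i]
  have h_a := DFunLike.congr_fun hconj a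
  rw [Derivation.conjAlgEquiv_apply, AlgEquiv.symm_symm] at h_a
  rw [← h_a, σ.apply_symm_apply]

variable [Fintype ι]

theorem derivation_apply_eq_sum_pderiv {A : Type*} [AddCommMonoid A] [Module R A]
    [Module (MvPolynomial ι R) A] [IsScalarTower R (MvPolynomial ι R) A]
    (D : Derivation R (MvPolynomial ι R) A) (p : MvPolynomial ι R) :
    D p = ∑ i, pderiv i p • D (X i) := by
  classical
  let E : ι → Derivation R (MvPolynomial ι R) A := fun i =>
    (LinearMap.toSpanSingleton (MvPolynomial ι R) A (D (X i))).compDer (pderiv i)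
  have sum_apply (q : MvPolynomial ι R) : (∑ i, E i) q = ∑ i, E i q :=
    (congrFun (map_sum Derivation.coeFnAddMonoidHom E Finset.univ) q).trans
      (Finset.sum_apply _ _ _)
  have hD : D = ∑ i, E i := derivation_ext fun j => by
    simp [sum_apply, E, pderiv_X, Pi.single_apply]
  conv_lhs => rw [hD, sum_apply]
  rfl

/-- Chain rule: `σ⁻¹ ∘ pderiv j ∘ σ` is a derivation of `R[X_i : i ∈ ι]`, so it expands along
the `pderiv i`. -/
theorem pderiv_algEquiv_apply (σ : MvPolynomial ι R ≃ₐ[R] MvPolynomial κ R) (j : κ)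
    (p : MvPolynomial ι R) :
    pderiv j (σ p) = ∑ i, σ (pderiv i p) * pderiv j (σ (X i)) := by
  apply σ.symm.injective
  have h := derivation_apply_eq_sum_pderiv (Derivation.conjAlgEquiv σ.symm (pderiv j)) p
  simpa [Derivation.conjAlgEquiv_apply, map_sum] using h

end CommSemiring

section CommRing

variable {R ι : Type*} [CommRing R] [Fintype ι] [DecidableEq ι]

noncomputable def jacobianMatrix (φ : MvPolynomial ι R →ₐ[R] MvPolynomial ι R) :
    Matrix ι ι (MvPolynomial ι R) :=
  Matrix.of fun i j => pderiv j (φ (X i))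

theorem jacobianMatrix_symm_map_mul_jacobianMatrix
    (σ : MvPolynomial ι R ≃ₐ[R] MvPolynomial ι R) :
    (jacobianMatrix (σ.symm : MvPolynomial ι R →ₐ[R] MvPolynomial ι R)).map σ *
      jacobianMatrix (σ : MvPolynomial ι R →ₐ[R] MvPolynomial ι R) = 1 := by
  ext k j
  have h := pderiv_algEquiv_apply σ j (σ.symm (X k))
  simp only [AlgEquiv.apply_symm_apply, pderiv_X] at h
  simp [jacobianMatrix, Matrix.mul_apply, Matrix.one_apply, ← h, Pi.single_apply]

theorem isUnit_det_jacobianMatrix (σ : MvPolynomial ι R ≃ₐ[R] MvPolynomial ι R) :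
    IsUnit (jacobianMatrix (σ : MvPolynomial ι R →ₐ[R] MvPolynomial ι R)).det :=
  Matrix.isUnit_det_of_left_inverse (jacobianMatrix_symm_map_mul_jacobianMatrix σ)

end CommRing

end MvPolynomial

-- Cramer's rule for a `2 × 2` system.
theorem eq_add_and_eq_add_iff_of_isUnit {K : Type*} [CommRing K] {a b c d s t u v : K}
    (hdet : IsUnit (a * d - b * c)) :
    (u = a * s + b * t ∧ v = c * s + d * t) ↔
      (v * a - u * c = (a * d - b * c) * t ∧ v * b - u * d = -(a * d - b * c) * s) := by
  refine ⟨fun ⟨hu, hv⟩ => ⟨by rw [hu, hv]; ring, by rw [hu, hv]; ring⟩, fun ⟨h₁, h₂⟩ => ⟨?_, ?_⟩⟩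
  · exact hdet.mul_left_cancel (by linear_combination b * h₁ - a * h₂)
  · exact hdet.mul_left_cancel (by linear_combination d * h₁ - c * h₂)

/-- For `D = f ∂x + g ∂y` and an automorphism `σ` with `P = σ(x)`, `Q = σ(y)` and
Jacobian `J = P_x Q_y − P_y Q_x`, `σ` commutes with `D` if and only if
`σ(g) P_x − σ(f) Q_x = J g` and `σ(g) P_y − σ(f) Q_y = −J f`,
i.e. `R^*(ω_D) = Jac(R) · ω_D`. -/
theorem commutes_iff_pullback_form (f g : Rxy) (D : Derivation ℂ Rxy Rxy)
    (hDx : D (X 0) = f) (hDy : D (X 1) = g)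
    (σ : Rxy ≃ₐ[ℂ] Rxy) (P Q J : Rxy)
    (hP : P = σ (X 0)) (hQ : Q = σ (X 1))
    (hJ : J = pderiv 0 P * pderiv 1 Q - pderiv 1 P * pderiv 0 Q) :
    (∀ a : Rxy, σ (D a) = D (σ a)) ↔
      (σ g * pderiv 0 P - σ f * pderiv 0 Q = J * g ∧
        σ g * pderiv 1 P - σ f * pderiv 1 Q = -J * f) := by
  have hdet : IsUnit (pderiv 0 P * pderiv 1 Q - pderiv 1 P * pderiv 0 Q) := by
    simpa [Matrix.det_fin_two, jacobianMatrix, hP, hQ] using isUnit_det_jacobianMatrix σ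
  rw [hJ, σ.commute_derivation_iff, Fin.forall_fin_two, derivation_apply_eq_sum_pderiv D (σ (X 0)),
    derivation_apply_eq_sum_pderiv D (σ (X 1))]
  simp only [Fin.sum_univ_two, hDx, hDy, smul_eq_mul, ← hP, ← hQ]
  exact eq_add_and_eq_add_iff_of_isUnit hdet
end

section
/- Let D be the derivation of ℂ[x,y] with D(x) = 1 and D(y) = 2x³y − 2x⁶ + 3x² + 2x, and let σ be the ℂ-algebra automorphism of ℂ[x,y] with σ(x) = −x and σ(y) = y − 2x³. Then σ is an involution (σ ∘ σ = id) and σ ∘ D ∘ σ = −D; in particular the order-two automorphism σ preserves the foliation defined by D. -/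
/-!
An algebra endomorphism of a polynomial ring is determined by its values on the variables, and so
is a derivation; `σ ∘ D ∘ σ⁻¹` is again a derivation. Hence both claims reduce to the generators:
`σ (σ y) = y - 2x³ - 2(-x)³ = y`, and
`σ (D (σ y)) = σ (D (y - 2x³)) = σ (2x³y - 2x⁶ - 3x² + 2x) = -(2x³y - 2x⁶ + 3x² + 2x) = -D y`.
-/

open MvPolynomial

namespace MvPolynomial

theorem involutive_of_apply_apply_X {R σ : Type*} [CommSemiring R]
    (f : MvPolynomial σ R →ₐ[R] MvPolynomial σ R) (h : ∀ i, f (f (X i)) = X i) :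
    Function.Involutive f :=
  AlgHom.congr_fun (algHom_ext h : f.comp f = AlgHom.id R _)

theorem derivation_conj_eq_of_X {R σ : Type*} [CommRing R]
    (e : MvPolynomial σ R ≃ₐ[R] MvPolynomial σ R)
    (D D' : Derivation R (MvPolynomial σ R) (MvPolynomial σ R))
    (h : ∀ i, e (D (e.symm (X i))) = D' (X i)) (p : MvPolynomial σ R) :
    e (D (e.symm p)) = D' p := by
  have hd : ∀ q, e q = 0 → e (D q) = 0 := fun q hq => by
    obtain rfl : q = 0 := e.injective (hq.trans (map_zero e).symm)
    simp
  exact congrArg (· p) (derivation_ext (D₁ := D.liftOfRightInverse e.apply_symm_apply hd) h)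

end MvPolynomial

/-- For the derivation `D = ∂x + (2x³y − 2x⁶ + 3x² + 2x) ∂y` and the automorphism
`σ : (x,y) ↦ (−x, y − 2x³)`, `σ` is an involution and `σ ∘ D ∘ σ = −D`:
the order-two automorphism `σ` preserves the foliation defined by `D`. -/
theorem involution_preserves_example (D : Derivation ℂ Rxy Rxy)
    (hDx : D (X 0) = 1)
    (hDy : D (X 1) = 2 * X 0 ^ 3 * X 1 - 2 * X 0 ^ 6 + 3 * X 0 ^ 2 + 2 * X 0)
    (σ : Rxy ≃ₐ[ℂ] Rxy)
    (hσx : σ (X 0) = -X 0) (hσy : σ (X 1) = X 1 - 2 * X 0 ^ 3) :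
    (∀ a : Rxy, σ (σ a) = a) ∧ (∀ a : Rxy, σ (D (σ a)) = -(D a)) := by
  have hinv : Function.Involutive σ := involutive_of_apply_apply_X σ.toAlgHom <|
    Fin.forall_fin_two.mpr
      ⟨by simp only [AlgEquiv.coe_toAlgHom, hσx, map_neg, neg_neg],
       by simp only [AlgEquiv.coe_toAlgHom, hσy, map_sub, map_mul, map_ofNat, map_pow, hσx]; ring⟩
  have hsymm : ∀ a, σ.symm a = σ a := fun a => σ.symm_apply_eq.mpr (hinv a).symm
  have hD2x3 : D (2 * X 0 ^ 3) = 6 * X 0 ^ 2 := by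
    have hD2 : D 2 = 0 := by exact_mod_cast D.map_natCast 2
    rw [Derivation.leibniz, Derivation.leibniz_pow, hDx, hD2]
    simp only [smul_eq_mul, nsmul_eq_mul]
    ring
  have hconj_x : σ (D (σ.symm (X 0))) = -D (X 0) := by
    rw [hsymm, hσx, map_neg, hDx, map_neg, map_one]
  have hconj_y : σ (D (σ.symm (X 1))) = -D (X 1) := by
    rw [hsymm, hσy, map_sub, hD2x3, hDy]
    simp only [map_sub, map_add, map_mul, map_ofNat, map_pow, hσx, hσy]
    ring
  refine ⟨hinv, fun a => ?_⟩
  rw [← hsymm a]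
  exact derivation_conj_eq_of_X σ D (-D) (Fin.forall_fin_two.mpr ⟨hconj_x, hconj_y⟩) a
end

section
/- Let D be the derivation of ℂ[x,y] with D(x) = −(1 + x(2x + y)) and D(y) = 2x(2x + y), let ρ be the linear ℂ-algebra automorphism of ℂ[x,y] with ρ(x) = y and ρ(y) = x − 2y, and let D' be the derivation with D'(x) = −2 and D'(y) = −(1 + xy). Then ρ ∘ D ∘ ρ⁻¹ = D'. In particular the foliation of Example 6.2 is linearly equivalent to a foliation of Shamsuddin type. -/
open MvPolynomial

/-- The derivation `D = −(1 + x(2x+y)) ∂x + 2x(2x+y) ∂y` of Example 6.2 is conjugated by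
the linear automorphism `ρ : x ↦ y, y ↦ x − 2y` to the Shamsuddin-type derivation
`D' = −2 ∂x − (1 + xy) ∂y`. -/
theorem example_GL_is_shamsuddin_type (D D' : Derivation ℂ Rxy Rxy)
    (hDx : D (X 0) = -(1 + X 0 * (2 * X 0 + X 1)))
    (hDy : D (X 1) = 2 * X 0 * (2 * X 0 + X 1))
    (ρ : Rxy ≃ₐ[ℂ] Rxy) (hρx : ρ (X 0) = X 1) (hρy : ρ (X 1) = X 0 - 2 * X 1)
    (hD'x : D' (X 0) = -2)
    (hD'y : D' (X 1) = -(1 + X 0 * X 1)) :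
    ∀ a : Rxy, ρ (D (ρ.symm a)) = D' a := by
  have hsx : ρ.symm (X 0) = 2 * X 0 + X 1 := by
    apply ρ.injective
    rw [AlgEquiv.apply_symm_apply]
    rw [map_add, map_mul, map_ofNat, hρx, hρy]
    ring
  have hsy : ρ.symm (X 1) = X 0 := by
    apply ρ.injective
    rw [AlgEquiv.apply_symm_apply, hρx]
  let E : Derivation ℂ Rxy Rxy :=
    { toLinearMap := ρ.toLinearMap ∘ₗ (D : Rxy →ₗ[ℂ] Rxy) ∘ₗ ρ.symm.toLinearMap
      map_one_eq_zero' := by simp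
      leibniz' := fun a b => by
        simp only [LinearMap.coe_comp, Function.comp_apply, AlgEquiv.toLinearMap_apply,
          Derivation.coeFn_coe, map_mul, Derivation.leibniz, smul_eq_mul, map_add,
          AlgEquiv.apply_symm_apply]
        try ring }
  have hE : ∀ a : Rxy, E a = ρ (D (ρ.symm a)) := fun a => rfl
  have key : E = D' := by
    apply MvPolynomial.derivation_ext
    intro i
    fin_cases i
    · show ρ (D (ρ.symm (X 0))) = D' (X 0)
      have h2 : D (2 * X 0 + X 1) = -2 := by
        rw [show (2 * X 0 + X 1 : Rxy) = X 0 + X 0 + X 1 by ring, map_add, map_add, hDx, hDy]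
        ring
      rw [hsx, h2, hD'x, map_neg, map_ofNat]
    · show ρ (D (ρ.symm (X 1))) = D' (X 1)
      rw [hsy, hD'y, hDx]
      rw [show (-(1 + X 0 * (2 * X 0 + X 1)) : Rxy) = -(1 + (2 * X 0 + X 1) * X 0) by ring]
      rw [map_neg, map_add, map_one, map_mul, map_add, map_mul, hρx, hρy, map_ofNat]
      ring
  intro a
  rw [← hE, key]
end

section
/- Let D₈ be the derivation of ℂ[x,y] with D₈(x) = 1 and D₈(y) = (x³+1)y + x⁸ + 3x⁵ + 1, let D_η be the derivation with D_η(x) = 1 and D_η(y) = (x³+1)y + 5x⁴ − x³ − 2x² + 4x, and let ρ be the ℂ-algebra automorphism of ℂ[x,y] with ρ(x) = x and ρ(y) = y + x⁵ + 2x² + 1. Then ρ⁻¹ ∘ D₈ ∘ ρ = D_η. In particular the foliations of Examples 6.4 and 6.5 are equivalent by a polynomial automorphism of degree five. -/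
open MvPolynomial

/-- The derivation `D₈ = ∂x + ((x³+1)y + x⁸ + 3x⁵ + 1) ∂y` of Example 6.5 is conjugated
by the degree-five automorphism `ρ : x ↦ x, y ↦ y + x⁵ + 2x² + 1` to the derivation
`D_η = ∂x + ((x³+1)y + 5x⁴ − x³ − 2x² + 4x) ∂y` of Example 6.4. -/
theorem example_degree_five_equivalence (D₈ Dη : Derivation ℂ Rxy Rxy)
    (hD8x : D₈ (X 0) = 1)
    (hD8y : D₈ (X 1) = (X 0 ^ 3 + 1) * X 1 + X 0 ^ 8 + 3 * X 0 ^ 5 + 1)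
    (hDηx : Dη (X 0) = 1)
    (hDηy : Dη (X 1) = (X 0 ^ 3 + 1) * X 1 + 5 * X 0 ^ 4 - X 0 ^ 3
      - 2 * X 0 ^ 2 + 4 * X 0)
    (ρ : Rxy ≃ₐ[ℂ] Rxy) (hρx : ρ (X 0) = X 0)
    (hρy : ρ (X 1) = X 1 + X 0 ^ 5 + 2 * X 0 ^ 2 + 1) :
    ∀ a : Rxy, ρ.symm (D₈ (ρ a)) = Dη a := by
  have hsx : ρ.symm (X 0) = X 0 := by
    apply ρ.injective; rw [ρ.apply_symm_apply, hρx]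
  have hsy : ρ.symm (X 1) = X 1 - X 0 ^ 5 - 2 * X 0 ^ 2 - 1 := by
    apply ρ.injective
    rw [ρ.apply_symm_apply]
    simp only [map_sub, map_mul, map_pow, map_one, map_ofNat, hρx, hρy]
    ring
  intro a
  induction a using MvPolynomial.induction_on with
  | C c =>
      have : (C c : Rxy) = algebraMap ℂ Rxy c := rfl
      rw [this, ρ.commutes, Derivation.map_algebraMap, map_zero,
        Derivation.map_algebraMap]
  | add p q hp hq =>
      rw [map_add, map_add, map_add, map_add, hp, hq]
  | mul_X p i hp =>
      rw [map_mul, Derivation.leibniz, smul_eq_mul, smul_eq_mul, map_add, map_mul,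
        map_mul, ρ.symm_apply_apply, ρ.symm_apply_apply, hp,
        Derivation.leibniz, smul_eq_mul, smul_eq_mul]
      congr 1
      fin_cases i
      · -- X 0
        show p * ρ.symm (D₈ (ρ (X 0))) = p * Dη (X 0)
        rw [hρx, hD8x, map_one, hDηx]
      · -- X 1
        show p * ρ.symm (D₈ (ρ (X 1))) = p * Dη (X 1)
        rw [hρy]
        have hD : D₈ (X 1 + X 0 ^ 5 + 2 * X 0 ^ 2 + 1)
            = (X 0 ^ 3 + 1) * X 1 + X 0 ^ 8 + 3 * X 0 ^ 5 + 1
              + 5 * X 0 ^ 4 + 4 * X 0 := by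
          have h5 : D₈ (X 0 ^ 5) = 5 * X 0 ^ 4 := by
            rw [Derivation.leibniz_pow, hD8x]
            simp [smul_eq_mul]
          have h2 : D₈ ((2 : Rxy) * X 0 ^ 2) = 4 * X 0 := by
            rw [Derivation.leibniz, Derivation.leibniz_pow, hD8x]
            have : D₈ (2 : Rxy) = 0 := by
              have : (2 : Rxy) = algebraMap ℂ Rxy 2 := by
                rw [algebraMap_eq, map_ofNat]
              rw [this, Derivation.map_algebraMap]
            rw [this]
            simp [smul_eq_mul]
            ring
          rw [map_add, map_add, map_add, hD8y, h5, h2, Derivation.map_one_eq_zero]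
          ring
        rw [hD]
        simp only [map_add, map_mul, map_pow, map_one, map_ofNat, hsx, hsy, hDηy]
        ring
end

section
/- Let j ∈ ℂ be a primitive cube root of unity (j² + j + 1 = 0). Let D be the derivation of ℂ[x,y] with D(x) = 1 + xy + x³ and D(y) = x(1 + xy), and let σ be the linear ℂ-algebra automorphism of ℂ[x,y] with σ(x) = j·x and σ(y) = j²·y. Then σ ∘ D ∘ σ⁻¹ = j² • D; in particular the order-three linear automorphism σ preserves the foliation defined by D. -/
open MvPolynomial

/-- For `j` a primitive cube root of unity, the derivation
`D = (1 + xy + x³) ∂x + x(1 + xy) ∂y` of Example 6.7 satisfies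
`σ ∘ D ∘ σ⁻¹ = j² • D` for the linear automorphism `σ : x ↦ jx, y ↦ j²y`;
in particular the order-three automorphism `σ` preserves the foliation defined by `D`. -/
theorem cerveau_example_symmetry (j : ℂ) (hj : j ^ 2 + j + 1 = 0)
    (D : Derivation ℂ Rxy Rxy)
    (hDx : D (X 0) = 1 + X 0 * X 1 + X 0 ^ 3)
    (hDy : D (X 1) = X 0 * (1 + X 0 * X 1))
    (σ : Rxy ≃ₐ[ℂ] Rxy)
    (hσx : σ (X 0) = C j * X 0) (hσy : σ (X 1) = C (j ^ 2) * X 1) :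
    ∀ a : Rxy, σ (D (σ.symm a)) = j ^ 2 • D a := by
  have hj3 : j ^ 3 = 1 := by linear_combination (j - 1) * hj
  have hC : ∀ c : ℂ, σ (C c) = C c := fun c => by
    simpa [MvPolynomial.algebraMap_eq] using σ.commutes c
  have hC3 : (C j : Rxy) ^ 3 = 1 := by rw [← map_pow, hj3, map_one]
  have hsx : σ.symm (X 0) = C (j ^ 2) * X 0 := by
    apply σ.injective
    rw [σ.apply_symm_apply, map_mul, hC, hσx, map_pow]
    linear_combination (-(X 0) : Rxy) * hC3
  have hsy : σ.symm (X 1) = C j * X 1 := by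
    apply σ.injective
    rw [σ.apply_symm_apply, map_mul, hC, hσy, map_pow]
    linear_combination (-(X 1) : Rxy) * hC3
  have hfix0 : σ (1 + X 0 * X 1 + X 0 ^ 3) = 1 + X 0 * X 1 + X 0 ^ 3 := by
    simp only [map_add, map_mul, map_one, map_pow, hσx, hσy]
    linear_combination ((X 0 * X 1 + X 0 ^ 3) : Rxy) * hC3
  have hkey0 : σ (D (σ.symm (X 0))) = j ^ 2 • D (X 0) := by
    rw [hsx, ← smul_eq_C_mul, D.map_smul, map_smul, hDx, hfix0]
  have hkey1 : σ (D (σ.symm (X 1))) = j ^ 2 • D (X 1) := by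
    rw [hsy, ← smul_eq_C_mul, D.map_smul, map_smul, hDy]
    simp only [map_add, map_mul, map_one, hσx, hσy]
    rw [smul_eq_C_mul, smul_eq_C_mul, map_pow]
    linear_combination ((C j ^ 2 * X 0 ^ 2 * X 1) : Rxy) * hC3
  intro a
  induction a using MvPolynomial.induction_on with
  | C c =>
      have : σ.symm (C c) = C c := by
        apply σ.injective; rw [σ.apply_symm_apply, hC]
      simp [this]
  | add p q hp hq => simp [map_add, hp, hq, smul_add]
  | mul_X p i hp =>
      have hkeyi : σ (D (σ.symm (X i))) = j ^ 2 • D (X i) := by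
        fin_cases i
        · exact hkey0
        · exact hkey1
      rw [map_mul, Derivation.leibniz, map_add, smul_eq_mul, smul_eq_mul,
        map_mul, map_mul, σ.apply_symm_apply, hp, hkeyi, Derivation.leibniz,
        smul_add, smul_eq_mul, smul_eq_mul]
      simp only [smul_eq_C_mul, σ.apply_symm_apply]
      ring
end
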